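/- arXiv:2208.11798 — 15 statements merged into one kernel-verified Lean document; each statement's English description precedes it below -/
import Mathlib

section
/- Suppose the random treatment assignment Z is invariant in distribution under all within-stratum permutations: for every family ψ = (ψ_1,…,ψ_S) of permutations ψ_s of {1,…,n_s}, the permuted vector (Z_{s,ψ_s(i)})_{s,i} has the same distribution as Z (this holds in any stratified exchangeable randomized experiment, where assignments are mutually independent across strata and exchangeable within each stratum). Then the stratified rank score statistic is distribution free: for any y, y' ∈ ℝ^N, the random variables t(Z, y) and t(Z, y') are identically distributed. -/
/-!
Ties being broken by index, `rankF v` is a bijection from `Fin m` onto `{1, …, m}` for every `v`.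
Hence for each stratum there is a permutation `σ_s` with `rank(y'_s) ∘ σ_s = rank(y_s)`, and
reindexing the sum gives `t(Z ∘ σ, y) = t(Z, y')`; as `Z ∘ σ` has the law of `Z`, so has
`t(Z, y)` the law of `t(Z ∘ σ, y) = t(Z, y')`.
-/

open MeasureTheory Finset

/-- 'First'-method rank: ties are broken by index. -/
noncomputable def rankF {m : ℕ} (v : Fin m → ℝ) (i : Fin m) : ℕ :=
  (Finset.univ.filter fun j => v j < v i ∨ (v j = v i ∧ j ≤ i)).card

/-- Stratified rank score statistic. -/
noncomputable def stratStat {S : ℕ} {n : Fin S → ℕ} (φ : Fin S → ℕ → ℝ)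
    (z : ∀ s, Fin (n s) → Bool) (y : ∀ s, Fin (n s) → ℝ) : ℝ :=
  ∑ s, ∑ i, if z s i then φ s (rankF (y s) i) else 0

theorem Function.Injective.exists_perm_comp_eq {α β : Type*} {f g : α → β}
    (hf : f.Injective) (hg : g.Injective) (h : Set.range f = Set.range g) :
    ∃ σ : Equiv.Perm α, f ∘ σ = g :=
  ⟨(Equiv.ofInjective g hg).trans ((Equiv.setCongr h.symm).trans (Equiv.ofInjective f hf).symm),
    funext fun a => by simp [Equiv.apply_ofInjective_symm]⟩

theorem card_filter_le_lt_card_filter_le {α β : Type*} [Fintype α] [Preorder β] [DecidableLE β]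
    {key : α → β} {i j : α} (h : key i < key j) :
    #{k | key k ≤ key i} < #{k | key k ≤ key j} := by
  refine card_lt_card ⟨fun k hk => ?_, fun hsub => ?_⟩
  · simp only [mem_filter, mem_univ, true_and] at hk ⊢
    exact hk.trans h.le
  · have hj : key j ≤ key i := by
      simpa using hsub (by simp : j ∈ ({k | key k ≤ key j} : Finset α))
    exact hj.not_gt h

theorem rankF_eq_card_lex {m : ℕ} (v : Fin m → ℝ) (i : Fin m) :
    rankF v i = #{j | toLex (v j, j) ≤ toLex (v i, i)} := by
  simp only [rankF, Prod.Lex.toLex_le_toLex]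

theorem rankF_injective {m : ℕ} (v : Fin m → ℝ) : (rankF v).Injective := by
  intro i j h
  by_contra hij
  have hkey : toLex (v i, i) ≠ toLex (v j, j) := fun hk => hij (congrArg Prod.snd hk)
  simp only [rankF_eq_card_lex] at h
  rcases hkey.lt_or_gt with hlt | hlt
  · exact (card_filter_le_lt_card_filter_le (key := fun k => toLex (v k, k)) hlt).ne h
  · exact (card_filter_le_lt_card_filter_le (key := fun k => toLex (v k, k)) hlt).ne' h

theorem rankF_mem_Icc {m : ℕ} (v : Fin m → ℝ) (i : Fin m) : rankF v i ∈ Set.Icc 1 m :=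
  ⟨card_pos.mpr ⟨i, by simp⟩, (card_filter_le _ _).trans_eq (card_fin m)⟩

theorem range_rankF {m : ℕ} (v : Fin m → ℝ) : Set.range (rankF v) = Set.Icc 1 m := by
  have himage : univ.image (rankF v) = Icc 1 m := by
    refine eq_of_subset_of_card_le (fun r hr => ?_) ?_
    · obtain ⟨i, -, rfl⟩ := mem_image.mp hr
      simpa using rankF_mem_Icc v i
    · rw [card_image_of_injective _ (rankF_injective v), card_univ, Fintype.card_fin,
        Nat.card_Icc, Nat.add_sub_cancel]
  rw [← coe_Icc, ← himage, coe_image, coe_univ, Set.image_univ]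

theorem exists_perm_rankF_comp_eq {m : ℕ} (v w : Fin m → ℝ) :
    ∃ σ : Equiv.Perm (Fin m), rankF v ∘ σ = rankF w :=
  (rankF_injective v).exists_perm_comp_eq (rankF_injective w) (by rw [range_rankF, range_rankF])

theorem stratStat_comp_perm {S : ℕ} {n : Fin S → ℕ} (φ : Fin S → ℕ → ℝ)
    {y y' : ∀ s, Fin (n s) → ℝ} {σ : ∀ s, Equiv.Perm (Fin (n s))}
    (hσ : ∀ s, rankF (y' s) ∘ σ s = rankF (y s)) (z : ∀ s, Fin (n s) → Bool) :
    stratStat φ (fun s i => z s (σ s i)) y = stratStat φ z y' := by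
  refine sum_congr rfl fun s _ => ?_
  refine Fintype.sum_equiv (σ s) _ _ fun i => ?_
  rw [← hσ s, Function.comp_apply]

theorem stmt0_general {Ω : Type*} [MeasurableSpace Ω] (P : Measure Ω)
    (S : ℕ) (n : Fin S → ℕ)
    (φ : Fin S → ℕ → ℝ)
    (Z : Ω → ∀ s, Fin (n s) → Bool) (hZ : Measurable Z)
    (hperm : ∀ ψ : ∀ s, Equiv.Perm (Fin (n s)),
      P.map (fun ω => fun s i => Z ω s (ψ s i)) = P.map Z)
    (y y' : ∀ s, Fin (n s) → ℝ) :
    P.map (fun ω => stratStat φ (Z ω) y) = P.map (fun ω => stratStat φ (Z ω) y') := by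
  choose σ hσ using fun s => exists_perm_rankF_comp_eq (y' s) (y s)
  have hstat : Measurable fun z : ∀ s, Fin (n s) → Bool => stratStat φ z y :=
    measurable_of_countable _
  have hZσ : Measurable fun ω s i => Z ω s (σ s i) :=
    (measurable_of_countable fun (z : ∀ s, Fin (n s) → Bool) s i => z s (σ s i)).comp hZ
  calc P.map (fun ω => stratStat φ (Z ω) y)
      = (P.map Z).map (stratStat φ · y) := (Measure.map_map hstat hZ).symm
    _ = (P.map fun ω s i => Z ω s (σ s i)).map (stratStat φ · y) := by rw [hperm]
    _ = P.map (fun ω => stratStat φ (Z ω) y') := by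
        rw [Measure.map_map hstat hZσ]
        simp only [Function.comp_def, stratStat_comp_perm φ hσ]

/-- Under within-stratum exchangeability of the treatment assignment, the stratified
rank score statistic is distribution free. -/
theorem stmt0 {Ω : Type*} [MeasurableSpace Ω] (P : Measure Ω) [IsProbabilityMeasure P]
    (S : ℕ) (hS : 1 ≤ S) (n : Fin S → ℕ) (hn : ∀ s, 1 ≤ n s)
    (φ : Fin S → ℕ → ℝ)
    (hφ : ∀ s, ∀ a b : ℕ, 1 ≤ a → a ≤ b → b ≤ n s → φ s a ≤ φ s b)
    (Z : Ω → ∀ s, Fin (n s) → Bool) (hZ : Measurable Z)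
    (hperm : ∀ ψ : ∀ s, Equiv.Perm (Fin (n s)),
      P.map (fun ω => fun s i => Z ω s (ψ s i)) = P.map Z)
    (y y' : ∀ s, Fin (n s) → ℝ) :
    P.map (fun ω => stratStat φ (Z ω) y) = P.map (fun ω => stratStat φ (Z ω) y') :=
  stmt0_general P S n φ Z hZ hperm y y'
end

section
/- (i) p̲_{k,c} ≤ p_{k,c} ≤ p̄_{k,c} for all integers 0 ≤ k ≤ N and all c ∈ ℝ; (ii) p̄_{k,c} ≤ p̲_{k,c'} for all integers 0 ≤ k ≤ N and all reals c < c'. (In words: the p-value computed with random/index tie-breaking is sandwiched between the p-values obtained by ordering all control units after, respectively before, the treated units within ties, and the upper-bound p-value at threshold c is below the lower-bound p-value at any larger threshold c'.) -/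
open Finset

/-- Within-stratum rank with ties broken by a fixed ordering `π`. -/
noncomputable def rnkA {m : ℕ} (π : Equiv.Perm (Fin m)) (v : Fin m → ℝ) (i : Fin m) : ℕ :=
  (Finset.univ.filter fun j => v j < v i ∨ (v j = v i ∧ π j ≤ π i)).card

/-- Rank with ties broken first placing control units (z = false) before treated ones. -/
noncomputable def rnkBar {m : ℕ} (z : Fin m → Bool) (π : Equiv.Perm (Fin m))
    (v : Fin m → ℝ) (i : Fin m) : ℕ :=
  (Finset.univ.filter fun j => v j < v i ∨ (v j = v i ∧ z j = false ∧ z i = true) ∨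
    (v j = v i ∧ z j = z i ∧ π j ≤ π i)).card

/-- Rank with ties broken first placing treated units (z = true) before control ones. -/
noncomputable def rnkLow {m : ℕ} (z : Fin m → Bool) (π : Equiv.Perm (Fin m))
    (v : Fin m → ℝ) (i : Fin m) : ℕ :=
  (Finset.univ.filter fun j => v j < v i ∨ (v j = v i ∧ z j = true ∧ z i = false) ∨
    (v j = v i ∧ z j = z i ∧ π j ≤ π i)).card

/-- Stratified rank sum statistic using ranks `rnkA`. -/
noncomputable def tA {S : ℕ} {n : Fin S → ℕ} (φ : Fin S → ℕ → ℝ)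
    (π : ∀ s, Equiv.Perm (Fin (n s))) (z : ∀ s, Fin (n s) → Bool)
    (y : ∀ s, Fin (n s) → ℝ) : ℝ :=
  ∑ s, ∑ i, if z s i then φ s (rnkA (π s) (y s) i) else 0

/-- Stratified rank sum statistic using ranks `rnkBar`. -/
noncomputable def tBar {S : ℕ} {n : Fin S → ℕ} (φ : Fin S → ℕ → ℝ)
    (π : ∀ s, Equiv.Perm (Fin (n s))) (z : ∀ s, Fin (n s) → Bool)
    (y : ∀ s, Fin (n s) → ℝ) : ℝ :=
  ∑ s, ∑ i, if z s i then φ s (rnkBar (z s) (π s) (y s) i) else 0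

/-- Stratified rank sum statistic using ranks `rnkLow`. -/
noncomputable def tLow {S : ℕ} {n : Fin S → ℕ} (φ : Fin S → ℕ → ℝ)
    (π : ∀ s, Equiv.Perm (Fin (n s))) (z : ∀ s, Fin (n s) → Bool)
    (y : ∀ s, Fin (n s) → ℝ) : ℝ :=
  ∑ s, ∑ i, if z s i then φ s (rnkLow (z s) (π s) (y s) i) else 0

/- Part (i) holds pointwise in `δ`: for a treated unit `rnkLow ≤ rnkA ≤ rnkBar`, and `φ` is
monotone. For (ii), given `δ ∈ H k c`, pick `ε ≤ c' - c` below every nonzero gap between the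
outcomes `Y - z ∘ δ`. Then `δ + ε ∈ H k c'`, and subtracting `ε` from the treated outcomes moves
each treated unit strictly below the controls it was tied with while preserving every strict
comparison, so the control-first ranks of `Y - z ∘ (δ + ε)` are the treated-first ranks of
`Y - z ∘ δ`. -/

section Ranks

variable {m : ℕ} (z : Fin m → Bool) (π : Equiv.Perm (Fin m)) (v : Fin m → ℝ) (i : Fin m)

lemma rnkA_mem_Icc : rnkA π v i ∈ Set.Icc 1 m :=
  ⟨card_pos.mpr ⟨i, by simp⟩, (card_le_univ _).trans_eq (Fintype.card_fin m)⟩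

lemma rnkBar_mem_Icc : rnkBar z π v i ∈ Set.Icc 1 m :=
  ⟨card_pos.mpr ⟨i, by simp⟩, (card_le_univ _).trans_eq (Fintype.card_fin m)⟩

lemma rnkLow_mem_Icc : rnkLow z π v i ∈ Set.Icc 1 m :=
  ⟨card_pos.mpr ⟨i, by simp⟩, (card_le_univ _).trans_eq (Fintype.card_fin m)⟩

variable {z i}

lemma rnkLow_le_rnkA (hi : z i = true) : rnkLow z π v i ≤ rnkA π v i := by
  refine card_le_card fun j hj => ?_
  simp only [mem_filter, mem_univ, true_and] at hj ⊢
  rcases hj with hlt | ⟨-, -, hzi⟩ | ⟨heq, -, hπ⟩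
  · exact Or.inl hlt
  · simp [hi] at hzi
  · exact Or.inr ⟨heq, hπ⟩

lemma rnkA_le_rnkBar (hi : z i = true) : rnkA π v i ≤ rnkBar z π v i := by
  refine card_le_card fun j hj => ?_
  simp only [mem_filter, mem_univ, true_and] at hj ⊢
  rcases hj with hlt | ⟨heq, hπ⟩
  · exact Or.inl hlt
  · cases hzj : z j
    · exact Or.inr (Or.inl ⟨heq, rfl, hi⟩)
    · exact Or.inr (Or.inr ⟨heq, hi.symm, hπ⟩)

lemma rnkBar_sub_treated {ε : ℝ} (hε : 0 < ε)
    (hgap : ∀ j k, v j ≠ v k → ε < |v j - v k|) (hi : z i = true) :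
    rnkBar z π (fun j => v j - if z j then ε else 0) i = rnkLow z π v i := by
  unfold rnkBar rnkLow
  refine congrArg card (filter_congr fun j _ => ?_)
  cases hzj : z j
  · simp only [hzj, hi, Bool.false_eq_true, if_true, if_false, sub_zero]
    by_cases hji : v j = v i
    · simp only [hji]
      grind
    · have hgap := hgap j i hji
      rw [lt_abs] at hgap
      constructor
      · rintro (hlt | ⟨heq, -⟩ | ⟨-, hne, -⟩)
        · exact Or.inl (by linarith)
        · rcases hgap with h | h <;> linarith
        · simp at hne
      · rintro (hlt | ⟨heq, -⟩ | ⟨-, hne, -⟩)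
        · exact Or.inl (by rcases hgap with h | h <;> linarith)
        · exact absurd heq hji
        · simp at hne
  · simp [hzj, hi]

end Ranks

section Statistics

variable {S : ℕ} {n : Fin S → ℕ} {φ : Fin S → ℕ → ℝ}
  (π : ∀ s, Equiv.Perm (Fin (n s))) (z : ∀ s, Fin (n s) → Bool)

lemma treatedScoreSum_le_treatedScoreSum (hφ : ∀ s, MonotoneOn (φ s) (Set.Icc 1 (n s)))
    {r r' : ∀ s, Fin (n s) → ℕ}
    (h : ∀ s i, z s i = true →
      r s i ∈ Set.Icc 1 (n s) ∧ r' s i ∈ Set.Icc 1 (n s) ∧ r s i ≤ r' s i) :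
    ∑ s, ∑ i, (if z s i then φ s (r s i) else 0) ≤
      ∑ s, ∑ i, if z s i then φ s (r' s i) else 0 := by
  gcongr with s _ i _
  cases hzi : z s i
  · simp
  · obtain ⟨hr, hr', hle⟩ := h s i hzi
    simpa using hφ s hr hr' hle

variable {π z}

lemma tLow_le_tA (hφ : ∀ s, MonotoneOn (φ s) (Set.Icc 1 (n s))) (y : ∀ s, Fin (n s) → ℝ) :
    tLow φ π z y ≤ tA φ π z y :=
  treatedScoreSum_le_treatedScoreSum z hφ fun _ _ hi =>
    ⟨rnkLow_mem_Icc .., rnkA_mem_Icc .., rnkLow_le_rnkA _ _ hi⟩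

lemma tA_le_tBar (hφ : ∀ s, MonotoneOn (φ s) (Set.Icc 1 (n s))) (y : ∀ s, Fin (n s) → ℝ) :
    tA φ π z y ≤ tBar φ π z y :=
  treatedScoreSum_le_treatedScoreSum z hφ fun _ _ hi =>
    ⟨rnkA_mem_Icc .., rnkBar_mem_Icc .., rnkA_le_rnkBar _ _ hi⟩

lemma bddBelow_range_tA (hφ : ∀ s, MonotoneOn (φ s) (Set.Icc 1 (n s))) :
    BddBelow (Set.range (tA φ π z)) :=
  ⟨_, Set.forall_mem_range.mpr fun y => treatedScoreSum_le_treatedScoreSum z hφ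
    fun s i _ => have h := rnkA_mem_Icc (π s) (y s) i
      ⟨Set.left_mem_Icc.mpr (h.1.trans h.2), h, h.1⟩⟩

lemma bddBelow_range_tBar (hφ : ∀ s, MonotoneOn (φ s) (Set.Icc 1 (n s))) :
    BddBelow (Set.range (tBar φ π z)) :=
  ⟨_, Set.forall_mem_range.mpr fun y => treatedScoreSum_le_treatedScoreSum z hφ
    fun s i _ => have h := rnkBar_mem_Icc (z s) (π s) (y s) i
      ⟨Set.left_mem_Icc.mpr (h.1.trans h.2), h, h.1⟩⟩

lemma bddBelow_range_tLow (hφ : ∀ s, MonotoneOn (φ s) (Set.Icc 1 (n s))) :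
    BddBelow (Set.range (tLow φ π z)) :=
  ⟨_, Set.forall_mem_range.mpr fun y => treatedScoreSum_le_treatedScoreSum z hφ
    fun s i _ => have h := rnkLow_mem_Icc (z s) (π s) (y s) i
      ⟨Set.left_mem_Icc.mpr (h.1.trans h.2), h, h.1⟩⟩

lemma tBar_sub_treated_eq_tLow {y : ∀ s, Fin (n s) → ℝ} {ε : ℝ} (hε : 0 < ε)
    (hgap : ∀ s j k, y s j ≠ y s k → ε < |y s j - y s k|) :
    tBar φ π z (fun s j => y s j - if z s j then ε else 0) = tLow φ π z y := by
  unfold tBar tLow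
  refine sum_congr rfl fun s _ => sum_congr rfl fun i _ => ?_
  cases hzi : z s i
  · rfl
  · simp only [if_true, rnkBar_sub_treated (π s) (y s) hε (hgap s) hzi]

end Statistics

open scoped Topology in
lemma exists_pos_lt_abs_sub_of_ne {ι : Type*} [Finite ι] (y : ι → ℝ) {d : ℝ} (hd : 0 < d) :
    ∃ ε, 0 < ε ∧ ε ≤ d ∧ ∀ j k, y j ≠ y k → ε < |y j - y k| := by
  have hgaps : ∀ᶠ ε in 𝓝[>] (0 : ℝ), ∀ p : ι × ι, y p.1 ≠ y p.2 → ε < |y p.1 - y p.2| := by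
    refine Filter.eventually_all.mpr fun p => ?_
    by_cases hp : y p.1 = y p.2
    · exact Filter.Eventually.of_forall fun _ h => absurd hp h
    · exact ((eventually_lt_nhds (abs_pos.mpr (sub_ne_zero.mpr hp))).filter_mono
        nhdsWithin_le_nhds).mono fun _ h _ => h
  obtain ⟨ε, hgap, hεd, hε⟩ :=
    (hgaps.and (((eventually_le_nhds hd).filter_mono nhdsWithin_le_nhds).and
      self_mem_nhdsWithin)).exists
  exact ⟨ε, hε, hεd, fun j k => hgap (j, k)⟩

lemma csInf_le_csInf_of_forall_exists_le {α β : Type*} {f : α → ℝ} {g : β → ℝ}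
    {s : Set α} {t : Set β} (hf : BddBelow (Set.range f)) (ht : t.Nonempty)
    (h : ∀ b ∈ t, ∃ a ∈ s, f a ≤ g b) :
    sInf {v | ∃ a ∈ s, v = f a} ≤ sInf {v | ∃ b ∈ t, v = g b} := by
  have hbdd : BddBelow {v | ∃ a ∈ s, v = f a} := by
    refine hf.mono ?_
    rintro _ ⟨a, -, rfl⟩
    exact ⟨a, rfl⟩
  obtain ⟨b₀, hb₀⟩ := ht
  refine le_csInf ⟨g b₀, b₀, hb₀, rfl⟩ ?_
  rintro _ ⟨b, hb, rfl⟩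
  obtain ⟨a, ha, hab⟩ := h b hb
  exact (csInf_le hbdd ⟨a, ha, rfl⟩).trans hab

theorem stmt1_general (S : ℕ) (n : Fin S → ℕ)
    (z : ∀ s, Fin (n s) → Bool) (Y : ∀ s, Fin (n s) → ℝ)
    (φ : Fin S → ℕ → ℝ)
    (hφ : ∀ s, ∀ a b : ℕ, 1 ≤ a → a ≤ b → b ≤ n s → φ s a ≤ φ s b)
    (π : ∀ s, Equiv.Perm (Fin (n s)))
    (G : ℝ → ℝ) (hG : Antitone G) :
    let N := ∑ s, n s
    let adj : (∀ s, Fin (n s) → ℝ) → ∀ s, Fin (n s) → ℝ :=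
      fun δ s i => Y s i - if z s i then δ s i else 0
    let H : ℕ → ℝ → Set (∀ s, Fin (n s) → ℝ) := fun k c =>
      {δ | ∑ s, (Finset.univ.filter fun i => c < δ s i).card ≤ N - k}
    let p : ℕ → ℝ → ℝ := fun k c => G (sInf {v | ∃ δ ∈ H k c, v = tA φ π z (adj δ)})
    let pbar : ℕ → ℝ → ℝ := fun k c => G (sInf {v | ∃ δ ∈ H k c, v = tLow φ π z (adj δ)})
    let plow : ℕ → ℝ → ℝ := fun k c => G (sInf {v | ∃ δ ∈ H k c, v = tBar φ π z (adj δ)})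
    (∀ k ≤ N, ∀ c : ℝ, plow k c ≤ p k c ∧ p k c ≤ pbar k c) ∧
    (∀ k ≤ N, ∀ c c' : ℝ, c < c' → pbar k c ≤ plow k c') := by
  intro N adj H p pbar plow
  have hmono : ∀ s, MonotoneOn (φ s) (Set.Icc 1 (n s)) :=
    fun s a ha b hb hab => hφ s a b ha.1 hab hb.2
  have hH : ∀ k c, (H k c).Nonempty := fun k c => ⟨fun _ _ => c, by simp [H]⟩
  have hbdd {t : (∀ s, Fin (n s) → ℝ) → ℝ} (ht : BddBelow (Set.range t)) :
      BddBelow (Set.range fun δ => t (adj δ)) :=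
    ht.mono (Set.range_comp_subset_range adj t)
  refine ⟨fun k _ c => ⟨hG ?_, hG ?_⟩, fun k _ c c' hcc' => hG ?_⟩
  · exact csInf_le_csInf_of_forall_exists_le (hbdd (bddBelow_range_tA hmono)) (hH k c)
      fun δ hδ => ⟨δ, hδ, tA_le_tBar hmono _⟩
  · exact csInf_le_csInf_of_forall_exists_le (hbdd (bddBelow_range_tLow hmono)) (hH k c)
      fun δ hδ => ⟨δ, hδ, tLow_le_tA hmono _⟩
  refine csInf_le_csInf_of_forall_exists_le (hbdd (bddBelow_range_tBar hmono)) (hH k c)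
    fun δ hδ => ?_
  obtain ⟨ε, hε, hεc, hgap⟩ := exists_pos_lt_abs_sub_of_ne
    (fun q : (s : Fin S) × Fin (n s) => adj δ q.1 q.2) (sub_pos.mpr hcc')
  have hshift :
      adj (fun s i => δ s i + ε) = fun s i => adj δ s i - if z s i then ε else 0 := by
    funext s i
    simp only [adj]
    split_ifs <;> ring
  refine ⟨fun s i => δ s i + ε, ?_, ?_⟩
  · refine le_trans (sum_le_sum fun s _ => card_le_card fun i hi => ?_) hδ
    simp only [mem_filter, mem_univ, true_and] at hi ⊢
    linarith
  · rw [hshift, tBar_sub_treated_eq_tLow hε fun s j k => hgap ⟨s, j⟩ ⟨s, k⟩]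

/-- The p-value computed with index tie-breaking is sandwiched between the p-values
obtained by ordering control units after/before treated units within ties, and the
upper-bound p-value at `c` is below the lower-bound p-value at any `c' > c`. -/
theorem stmt1 (S : ℕ) (hS : 1 ≤ S) (n : Fin S → ℕ) (hn : ∀ s, 1 ≤ n s)
    (z : ∀ s, Fin (n s) → Bool) (Y : ∀ s, Fin (n s) → ℝ)
    (φ : Fin S → ℕ → ℝ)
    (hφ : ∀ s, ∀ a b : ℕ, 1 ≤ a → a ≤ b → b ≤ n s → φ s a ≤ φ s b)
    (π : ∀ s, Equiv.Perm (Fin (n s)))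
    (G : ℝ → ℝ) (hG : Antitone G) :
    let N := ∑ s, n s
    let adj : (∀ s, Fin (n s) → ℝ) → ∀ s, Fin (n s) → ℝ :=
      fun δ s i => Y s i - if z s i then δ s i else 0
    let H : ℕ → ℝ → Set (∀ s, Fin (n s) → ℝ) := fun k c =>
      {δ | ∑ s, (Finset.univ.filter fun i => c < δ s i).card ≤ N - k}
    let p : ℕ → ℝ → ℝ := fun k c => G (sInf {v | ∃ δ ∈ H k c, v = tA φ π z (adj δ)})
    let pbar : ℕ → ℝ → ℝ := fun k c => G (sInf {v | ∃ δ ∈ H k c, v = tLow φ π z (adj δ)})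
    let plow : ℕ → ℝ → ℝ := fun k c => G (sInf {v | ∃ δ ∈ H k c, v = tBar φ π z (adj δ)})
    (∀ k ≤ N, ∀ c : ℝ, plow k c ≤ p k c ∧ p k c ≤ pbar k c) ∧
    (∀ k ≤ N, ∀ c c' : ℝ, c < c' → pbar k c ≤ plow k c') :=
  stmt1_general S n z Y φ hφ π G hG
end

section
/- The map Ψ̃ is a monotone dominating transformation, and it is optimal among all monotone dominating transformations: for every m ≥ 1, every a ∈ ℝ^m and every monotone dominating transformation Ψ, one has Σ_{i=1}^j Ψ̃_i(a) ≤ Σ_{i=1}^j Ψ_i(a) for all 1 ≤ j ≤ m. -/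
/-!
`Ψ̃` is built greedily: having fixed the partial sums `C_i = Σ_{t≤i} Ψ̃_t` up to `i`, the next
value `Ψ̃_{i+1}` is the smallest constant `c` such that `C_i + (j - i) c ≥ S_j = Σ_{t≤j} a_t` for
all `j > i`. Taking `j = i + 1` gives domination. If `j` attains the maximum at step `i + 1`, then
`S_j - C_i ≤ (j - i) Ψ̃_{i+1}` from step `i` rewrites as `Ψ̃_{i+2} ≤ Ψ̃_{i+1}`, so `Ψ̃` is
nonincreasing. For optimality, let `Ψ` be monotone dominating, `P_i = Σ_{t≤i} Ψ_t`, and let `k`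
attain the maximum at step `i`. Then `S_k ≤ P_k ≤ P_i + (k - i) Ψ_{i+1}` since `Ψ` is
nonincreasing, and with `C_i ≤ P_i` by induction and `k - i ≥ 1` this gives
`C_{i+1} ≤ P_{i+1}`.
-/

/-- Cumulative sums `C i = Σ_{t=1}^i Ψ̃_t(a)` of the optimal monotone dominating
transformation of the vector `(a 1, …, a m)`. -/
noncomputable def psiSum (m : ℕ) (a : ℕ → ℝ) : ℕ → ℝ
  | 0 => 0
  | i + 1 => psiSum m a i +
      sSup {x : ℝ | ∃ j : ℕ, i + 1 ≤ j ∧ j ≤ m ∧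
        x = ((∑ t ∈ Finset.Icc 1 j, a t) - psiSum m a i) / ((j : ℝ) - (i : ℝ))}

/-- The optimal monotone dominating transformation `Ψ̃` (indices 1,…,m):
`Ψ̃_1(a) = max_{1≤j≤m} (Σ_{t≤j} a_t)/j` and
`Ψ̃_i(a) = max_{i≤j≤m} (Σ_{t≤j} a_t − Σ_{t<i} Ψ̃_t(a))/(j−i+1)`. -/
noncomputable def psiT (m : ℕ) (a : ℕ → ℝ) (i : ℕ) : ℝ :=
  psiSum m a i - psiSum m a (i - 1)

/-- `Ψ` is a monotone dominating transformation: for every length `m` and vector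
`(a 1, …, a m)`, the transformed sequence is nonincreasing and its partial sums
dominate those of `a`. -/
def MonoDomTrans (Ψ : ℕ → (ℕ → ℝ) → ℕ → ℝ) : Prop :=
  ∀ (m : ℕ) (a : ℕ → ℝ),
    (∀ i j : ℕ, 1 ≤ i → i ≤ j → j ≤ m → Ψ m a j ≤ Ψ m a i) ∧
    (∀ j : ℕ, 1 ≤ j → j ≤ m →
      ∑ i ∈ Finset.Icc 1 j, a i ≤ ∑ i ∈ Finset.Icc 1 j, Ψ m a i)

open Finset

theorem Finset.sum_Icc_one_add_sum_Ioc {M : Type*} [AddCommMonoid M] (f : ℕ → M) {j k : ℕ}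
    (hjk : j ≤ k) : ∑ i ∈ Icc 1 j, f i + ∑ i ∈ Ioc j k, f i = ∑ i ∈ Icc 1 k, f i := by
  have hIcc (n : ℕ) : Icc 1 n = Ioc 0 n := Icc_add_one_left_eq_Ioc 0 n
  rw [hIcc, hIcc, sum_Ioc_consecutive f (Nat.zero_le j) hjk]

theorem Finset.sum_Ioc_le_mul_of_le {R : Type*} [Ring R] [PartialOrder R] [IsOrderedRing R]
    {f : ℕ → R} {j k : ℕ} {c : R} (hjk : j ≤ k) (hf : ∀ i ∈ Ioc j k, f i ≤ c) :
    ∑ i ∈ Ioc j k, f i ≤ ((k : R) - j) * c := by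
  have h := sum_le_card_nsmul (Ioc j k) f c hf
  rwa [Nat.card_Ioc, nsmul_eq_mul, Nat.cast_sub hjk] at h

theorem Nat.one_le_cast_sub_cast {i j : ℕ} (h : i + 1 ≤ j) : (1 : ℝ) ≤ (j : ℝ) - i := by
  have : (i : ℝ) + 1 ≤ j := by exact_mod_cast h
  linarith

namespace psiT

variable (m : ℕ) (a : ℕ → ℝ)

def excessSet (i : ℕ) : Set ℝ :=
  {x : ℝ | ∃ j : ℕ, i + 1 ≤ j ∧ j ≤ m ∧
    x = ((∑ t ∈ Icc 1 j, a t) - psiSum m a i) / ((j : ℝ) - (i : ℝ))}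

theorem succ_eq_sSup (i : ℕ) : psiT m a (i + 1) = sSup (excessSet m a i) := by
  rw [psiT, Nat.add_sub_cancel, psiSum, add_sub_cancel_left]
  rfl

theorem psiSum_succ (i : ℕ) : psiSum m a (i + 1) = psiSum m a i + psiT m a (i + 1) := by
  rw [psiT, Nat.add_sub_cancel, add_sub_cancel]

theorem sum_Icc_eq_psiSum (j : ℕ) : ∑ i ∈ Icc 1 j, psiT m a i = psiSum m a j := by
  induction j with
  | zero => simp [psiSum]
  | succ j ih => rw [sum_Icc_succ_top (Nat.le_add_left 1 j), ih, psiSum_succ]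

theorem excessSet_finite (i : ℕ) : (excessSet m a i).Finite := by
  refine ((Set.finite_Icc (i + 1) m).image
    fun j : ℕ => ((∑ t ∈ Icc 1 j, a t) - psiSum m a i) / ((j : ℝ) - (i : ℝ))).subset ?_
  rintro x ⟨j, hij, hjm, rfl⟩
  exact ⟨j, ⟨hij, hjm⟩, rfl⟩

theorem sum_Icc_sub_psiSum_le_mul {i j : ℕ} (hij : i + 1 ≤ j) (hjm : j ≤ m) :
    ∑ t ∈ Icc 1 j, a t - psiSum m a i ≤ ((j : ℝ) - i) * psiT m a (i + 1) := by
  have hpos : (0 : ℝ) < (j : ℝ) - i := one_pos.trans_le (Nat.one_le_cast_sub_cast hij)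
  rw [succ_eq_sSup, ← div_le_iff₀' hpos]
  exact le_csSup (excessSet_finite m a i).bddAbove ⟨j, hij, hjm, rfl⟩

theorem exists_sum_Icc_sub_psiSum_eq_mul {i : ℕ} (him : i + 1 ≤ m) :
    ∃ k, i + 1 ≤ k ∧ k ≤ m ∧
      ∑ t ∈ Icc 1 k, a t - psiSum m a i = ((k : ℝ) - i) * psiT m a (i + 1) := by
  obtain ⟨k, hik, hkm, hk⟩ := Set.Nonempty.csSup_mem (s := excessSet m a i)
    ⟨_, ⟨i + 1, le_rfl, him, rfl⟩⟩ (excessSet_finite m a i)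
  have hpos : (0 : ℝ) < (k : ℝ) - i := one_pos.trans_le (Nat.one_le_cast_sub_cast hik)
  refine ⟨k, hik, hkm, ?_⟩
  rw [succ_eq_sSup, hk, mul_div_cancel₀ _ hpos.ne']

theorem sum_Icc_le_psiSum {j : ℕ} (hj : 1 ≤ j) (hjm : j ≤ m) :
    ∑ t ∈ Icc 1 j, a t ≤ psiSum m a j := by
  obtain ⟨i, rfl⟩ := Nat.exists_eq_add_of_le' hj
  have h := sum_Icc_sub_psiSum_le_mul m a (le_refl (i + 1)) hjm
  rw [psiSum_succ]
  push_cast at h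
  linarith

theorem succ_succ_le {i : ℕ} (him : i + 2 ≤ m) : psiT m a (i + 2) ≤ psiT m a (i + 1) := by
  obtain ⟨j, hij, hjm, hj⟩ := exists_sum_Icc_sub_psiSum_eq_mul m a (i := i + 1) him
  have hstep := sum_Icc_sub_psiSum_le_mul m a (show i + 1 ≤ j by omega) hjm
  have hpos : (0 : ℝ) < (j : ℝ) - (i + 1 : ℕ) := one_pos.trans_le (Nat.one_le_cast_sub_cast hij)
  rw [psiSum_succ] at hj
  refine le_of_mul_le_mul_left ?_ hpos
  push_cast at hj hstep ⊢
  linarith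

theorem antitoneOn : AntitoneOn (psiT m a) (Set.Icc 1 m) := by
  refine antitoneOn_of_succ_le Set.ordConnected_Icc fun i _ hi hsi => ?_
  obtain ⟨i, rfl⟩ := Nat.exists_eq_add_of_le' hi.1
  exact succ_succ_le m a hsi.2

theorem monoDomTrans : MonoDomTrans psiT := fun m a =>
  ⟨fun _ _ hi hij hjm => antitoneOn m a ⟨hi, hij.trans hjm⟩ ⟨hi.trans hij, hjm⟩ hij,
    fun j hj hjm => sum_Icc_eq_psiSum m a j ▸ sum_Icc_le_psiSum m a hj hjm⟩

theorem psiSum_le_sum_of_monoDomTrans {Ψ : ℕ → (ℕ → ℝ) → ℕ → ℝ} (hΨ : MonoDomTrans Ψ)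
    {j : ℕ} (hjm : j ≤ m) : psiSum m a j ≤ ∑ i ∈ Icc 1 j, Ψ m a i := by
  induction j with
  | zero => simp [psiSum]
  | succ j ih =>
    obtain ⟨k, hjk, hkm, hk⟩ := exists_sum_Icc_sub_psiSum_eq_mul m a hjm
    set P := ∑ i ∈ Icc 1 j, Ψ m a i
    set C := psiSum m a j
    have hCP : C ≤ P := ih (by omega)
    have hd : (1 : ℝ) ≤ (k : ℝ) - j := Nat.one_le_cast_sub_cast hjk
    have hdom : ∑ t ∈ Icc 1 k, a t ≤ P + ((k : ℝ) - j) * Ψ m a (j + 1) :=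
      calc ∑ t ∈ Icc 1 k, a t
          ≤ ∑ i ∈ Icc 1 k, Ψ m a i := (hΨ m a).2 k (by omega) hkm
        _ = P + ∑ i ∈ Ioc j k, Ψ m a i := (sum_Icc_one_add_sum_Ioc _ (by omega)).symm
        _ ≤ P + ((k : ℝ) - j) * Ψ m a (j + 1) := by
          gcongr
          refine sum_Ioc_le_mul_of_le (by omega) fun i hi => ?_
          exact (hΨ m a).1 (j + 1) i (by omega) (mem_Ioc.1 hi).1 ((mem_Ioc.1 hi).2.trans hkm)
    have key : ((k : ℝ) - j) * psiT m a (j + 1) ≤ ((k : ℝ) - j) * (P - C + Ψ m a (j + 1)) :=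
      calc ((k : ℝ) - j) * psiT m a (j + 1)
          = ∑ t ∈ Icc 1 k, a t - C := hk.symm
        _ ≤ P - C + ((k : ℝ) - j) * Ψ m a (j + 1) := by linarith
        _ ≤ ((k : ℝ) - j) * (P - C + Ψ m a (j + 1)) := by
          linarith [mul_nonneg (sub_nonneg.2 hd) (sub_nonneg.2 hCP)]
    rw [psiSum_succ, sum_Icc_succ_top (Nat.le_add_left 1 j)]
    linarith [le_of_mul_le_mul_left key (by linarith)]

end psiT

/-- `Ψ̃` is a monotone dominating transformation, and it is optimal: its partial sums
are below those of any monotone dominating transformation. -/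
theorem stmt2 :
    MonoDomTrans psiT ∧
    ∀ Ψ : ℕ → (ℕ → ℝ) → ℕ → ℝ, MonoDomTrans Ψ →
      ∀ (m : ℕ) (a : ℕ → ℝ) (j : ℕ), 1 ≤ m → 1 ≤ j → j ≤ m →
        ∑ i ∈ Finset.Icc 1 j, psiT m a i ≤ ∑ i ∈ Finset.Icc 1 j, Ψ m a i := by
  refine ⟨psiT.monoDomTrans, fun Ψ hΨ m a j _ _ hjm => ?_⟩
  rw [psiT.sum_Icc_eq_psiSum]
  exact psiT.psiSum_le_sum_of_monoDomTrans m a hΨ hjm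
end

section
/- Let N ≥ 1 be an integer, α ∈ ℝ, and p : {0,1,…,N} × ℝ → ℝ be nondecreasing in its second argument and nonincreasing in its first argument (p(k,c) ≤ p(k,c') whenever c ≤ c', and p(k',c) ≤ p(k,c) whenever k ≤ k'), with p(0,c) > α for every c ∈ ℝ. Define I_α(k) = {c ∈ ℝ : p(k,c) > α} for 1 ≤ k ≤ N and S_α(c) = {N − k : 0 ≤ k ≤ N, p(k,c) > α}. Then: (i) each I_α(k) is upward closed (if c ∈ I_α(k) and c' ≥ c then c' ∈ I_α(k)); (ii) the following three subsets of ℝ^N coincide: {δ : δ_(k) ∈ I_α(k) for every 1 ≤ k ≤ N} = {δ : #{i : δ_i > c} ∈ S_α(c) for every c ∈ ℝ} = ⋂_{(k,c) : 0 ≤ k ≤ N, p(k,c) ≤ α} (ℝ^N \ H_{k,c}). -/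
/-! Write `n(c) = #{i | c < δ i}`. Since `δ_(k) ≤ c ↔ n(c) ≤ N - k`, all three sets say the same:
`α < p k c` whenever `n(c) ≤ N - k`. For the order statistics this uses monotonicity in `c`
(and `p 0 > α` for `k = 0`); for the counts `S_α(c)` it uses monotonicity in `k`. -/

open Finset

theorem Finset.card_filter_comp_perm {ι : Type*} [Fintype ι] (σ : Equiv.Perm ι) (P : ι → Prop)
    [DecidablePred P] : #{j | P (σ j)} = #{i | P i} :=
  card_equiv σ (by simp)

namespace Tuple

variable {β : Type*} [LinearOrder β] {N : ℕ}

theorem sort_apply_le_iff_lt_card (δ : Fin N → β) (k : Fin N) (c : β) :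
    δ (sort δ k) ≤ c ↔ k < #{i | δ i ≤ c} := by
  rw [← card_filter_comp_perm (sort δ) (δ · ≤ c)]
  exact (lt_card_le_iff_apply_le_of_monotone (monotone_sort δ)).symm

theorem card_filter_lt_le_iff_sort_apply_le (δ : Fin N → β) (k : Fin N) (c : β) :
    #{i | c < δ i} ≤ N - (k + 1) ↔ δ (sort δ k) ≤ c := by
  have hsplit : #{i | c < δ i} + #{i | δ i ≤ c} = N := by
    simpa [not_lt] using card_filter_add_card_filter_not (s := univ) (fun i => c < δ i)
  rw [sort_apply_le_iff_lt_card]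
  omega

end Tuple

section Acceptance

variable {β γ : Type*} [LinearOrder β] [Preorder γ] {N : ℕ} {α : γ} {p : ℕ → β → γ}

theorem forall_lt_sort_iff_forall_card_filter_le (hpc : ∀ k ≤ N, Monotone (p k))
    (hp0 : ∀ c, α < p 0 c) (δ : Fin N → β) :
    (∀ k : Fin N, α < p (k.1 + 1) (δ (Tuple.sort δ k))) ↔
      ∀ k ≤ N, ∀ c, #{i | c < δ i} ≤ N - k → α < p k c := by
  constructor
  · rintro hA (_ | m) hm c hcard
    · exact hp0 c
    · have hsort := (Tuple.card_filter_lt_le_iff_sort_apply_le δ ⟨m, hm⟩ c).1 hcard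
      exact (hA ⟨m, hm⟩).trans_le (hpc _ hm hsort)
  · intro hC k
    exact hC (k.1 + 1) k.2 _ ((Tuple.card_filter_lt_le_iff_sort_apply_le δ k _).2 le_rfl)

theorem forall_exists_card_filter_eq_iff_forall_card_filter_le
    (hpk : ∀ k k' : ℕ, k ≤ k' → k' ≤ N → ∀ c, p k' c ≤ p k c) (δ : Fin N → β) :
    (∀ c, ∃ k ≤ N, α < p k c ∧ #{i | c < δ i} = N - k) ↔
      ∀ k ≤ N, ∀ c, #{i | c < δ i} ≤ N - k → α < p k c := by
  constructor
  · intro hB k hk c hcard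
    obtain ⟨k', hk', hα, hcard'⟩ := hB c
    exact hα.trans_le (hpk k k' (by omega) hk' c)
  · intro hC c
    have hcard_le : #{i | c < δ i} ≤ N := (card_filter_le _ _).trans_eq (card_fin N)
    exact ⟨N - #{i | c < δ i}, N.sub_le _, hC _ (N.sub_le _) c (by omega), by omega⟩

end Acceptance

theorem stmt3_general (N : ℕ) (α : ℝ) (p : ℕ → ℝ → ℝ)
    (hpc : ∀ k ≤ N, ∀ c c' : ℝ, c ≤ c' → p k c ≤ p k c')
    (hpk : ∀ k k' : ℕ, k ≤ k' → k' ≤ N → ∀ c : ℝ, p k' c ≤ p k c)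
    (hp0 : ∀ c : ℝ, α < p 0 c) :
    (∀ k : ℕ, 1 ≤ k → k ≤ N → ∀ c c' : ℝ, α < p k c → c ≤ c' → α < p k c') ∧
    ({δ : Fin N → ℝ | ∀ k : Fin N, α < p (k.1 + 1) (δ (Tuple.sort δ k))} =
      {δ : Fin N → ℝ | ∀ c : ℝ, ∃ k ≤ N, α < p k c ∧
        (Finset.univ.filter fun i => c < δ i).card = N - k}) ∧
    ({δ : Fin N → ℝ | ∀ k : Fin N, α < p (k.1 + 1) (δ (Tuple.sort δ k))} =
      {δ : Fin N → ℝ | ∀ k ≤ N, ∀ c : ℝ, p k c ≤ α →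
        ¬ (Finset.univ.filter fun i => c < δ i).card ≤ N - k}) := by
  have hsort (δ : Fin N → ℝ) :=
    forall_lt_sort_iff_forall_card_filter_le (fun k hk _ _ => hpc k hk _ _) hp0 δ
  refine ⟨fun k _ hk c c' hc hcc' => hc.trans_le (hpc k hk c c' hcc'), ?_, ?_⟩
  · ext δ
    exact (hsort δ).trans (forall_exists_card_filter_eq_iff_forall_card_filter_le hpk δ).symm
  · ext δ
    refine (hsort δ).trans (forall₂_congr fun k _ => forall_congr' fun c => ?_)
    rw [← not_lt (a := α), not_imp_not]

/-- Monotonicity of the p-values in the quantile index and the threshold yields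
simultaneously valid confidence sets: (i) each confidence set `I_α(k)` for the k-th
order statistic is upward closed; (ii) the intersection over k of the events
`δ_(k) ∈ I_α(k)` equals the intersection over c of `#{i : δ_i > c} ∈ S_α(c)`, and both
equal the intersection of the complements of the rejected null sets `H_{k,c}`. -/
theorem stmt3 (N : ℕ) (hN : 1 ≤ N) (α : ℝ) (p : ℕ → ℝ → ℝ)
    (hpc : ∀ k ≤ N, ∀ c c' : ℝ, c ≤ c' → p k c ≤ p k c')
    (hpk : ∀ k k' : ℕ, k ≤ k' → k' ≤ N → ∀ c : ℝ, p k' c ≤ p k c)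
    (hp0 : ∀ c : ℝ, α < p 0 c) :
    (∀ k : ℕ, 1 ≤ k → k ≤ N → ∀ c c' : ℝ, α < p k c → c ≤ c' → α < p k c') ∧
    ({δ : Fin N → ℝ | ∀ k : Fin N, α < p (k.1 + 1) (δ (Tuple.sort δ k))} =
      {δ : Fin N → ℝ | ∀ c : ℝ, ∃ k ≤ N, α < p k c ∧
        (Finset.univ.filter fun i => c < δ i).card = N - k}) ∧
    ({δ : Fin N → ℝ | ∀ k : Fin N, α < p (k.1 + 1) (δ (Tuple.sort δ k))} =
      {δ : Fin N → ℝ | ∀ k ≤ N, ∀ c : ℝ, p k c ≤ α →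
        ¬ (Finset.univ.filter fun i => c < δ i).card ≤ N - k}) :=
  stmt3_general N α p hpc hpk hp0
end

section
/- Let S ≥ 1 and n_1,…,n_S ≥ 1 be integers, N = Σ_s n_s, and let k be an integer with 0 ≤ k ≤ N; set n_{sk} = min(n_s, N−k). Let t_s(0), t_s(1), …, t_s(n_{sk}) be arbitrary real numbers for each s, and Δ_s = (t_s(0)−t_s(1), …, t_s(n_{sk}−1)−t_s(n_{sk})) ∈ ℝ^{n_{sk}}. Then the optimal value of the linear program min Σ_{s=1}^S Σ_{l=0}^{n_{sk}} x_{sl} t_s(l) over reals x_{sl} ∈ [0,1] with Σ_{l=0}^{n_{sk}} x_{sl} = 1 for every s and Σ_{s=1}^S Σ_{l=0}^{n_{sk}} l·x_{sl} = N−k equals Σ_{s=1}^S t_s(0) − max{Σ_{s=1}^S Σ_{j=1}^{l_s} Ψ̃_j(Δ_s) : (l_1,…,l_S) integers with 0 ≤ l_s ≤ n_{sk} for all s and Σ_s l_s = N−k} (empty sums are 0). In words, the greedy algorithm based on the optimal monotone dominating transformation solves the linear programming relaxation exactly. -/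
/-!
Write `A(l) = ∑_{j ≤ l} Δ_s(j) = t_s(0) - t_s(l)`; minimising the LP objective then means
maximising `∑_s ∑_l x_{sl} A_s(l)`.
The cumulative sums `C(l) = ∑_{j ≤ l} Ψ̃_j` (`psiSum`) form the least concave majorant of `A` on
`{0, …, m}`: `A ≤ C`, the increments `Ψ̃_j` are nonincreasing, and every `C(l)` is a convex
combination of `A(p)` and `A(q)` with `p ≤ l ≤ q`. The two-point distributions thus realise `C`, so
the LP has the same value with `A_s` replaced by `C_s`. An integral maximiser `l*` of
`∑_s C_s(l_s)` subject to `∑_s l_s = N - k` admits, by an exchange argument, a threshold `λ` that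
separates the increments it uses from those it does not; then `C_s(l) - λ l ≤ C_s(l*_s) - λ l*_s`
for all `l`, and averaging over `x` shows that no fractional point does better than `l*`.
-/

open Finset

namespace PsiTilde

variable (m : ℕ) (a : ℕ → ℝ)

noncomputable def partialSum (j : ℕ) : ℝ := ∑ t ∈ Icc 1 j, a t

noncomputable def slopes (i : ℕ) : Set ℝ :=
  (fun j : ℕ => (partialSum a j - psiSum m a i) / ((j : ℝ) - i)) '' Set.Icc (i + 1) m

lemma psiT_succ (i : ℕ) : psiT m a (i + 1) = sSup (slopes m a i) := by
  rw [psiT, Nat.add_sub_cancel, psiSum, add_sub_cancel_left]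
  congr 1
  ext x
  simp only [slopes, partialSum, Set.mem_ofPred_eq, Set.mem_image, Set.mem_Icc, and_assoc,
    eq_comm (a := x)]

lemma psiSum_succ (i : ℕ) : psiSum m a (i + 1) = psiSum m a i + psiT m a (i + 1) := by
  rw [psiT, Nat.add_sub_cancel, add_sub_cancel]

lemma psiSum_eq_sum_psiT (l : ℕ) : psiSum m a l = ∑ j ∈ Icc 1 l, psiT m a j := by
  induction l with
  | zero => simp [psiSum]
  | succ l ih => rw [sum_Icc_succ_top (by omega), ← ih, psiSum_succ]

variable {m}

lemma isLeast_psiT {i : ℕ} (hi : i < m) :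
    IsLeast {d | ∀ j : ℕ, i < j → j ≤ m → partialSum a j ≤ psiSum m a i + (j - i) * d}
      (psiT m a (i + 1)) := by
  have hfin : (slopes m a i).Finite := (Set.finite_Icc _ _).image _
  rw [psiT_succ]
  constructor
  · intro j hij hjm
    have hpos : (0 : ℝ) < j - i := sub_pos.2 (Nat.cast_lt.2 hij)
    have := le_csSup hfin.bddAbove ⟨j, Set.mem_Icc.2 ⟨hij, hjm⟩, rfl⟩
    rw [div_le_iff₀ hpos] at this
    linarith
  · intro d hd
    refine csSup_le ⟨_, ⟨m, Set.mem_Icc.2 ⟨hi, le_rfl⟩, rfl⟩⟩ ?_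
    rintro _ ⟨j, hj, rfl⟩
    have hpos : (0 : ℝ) < j - i := sub_pos.2 (Nat.cast_lt.2 (Set.mem_Icc.1 hj).1)
    rw [div_le_iff₀ hpos]
    linarith [hd j (Set.mem_Icc.1 hj).1 (Set.mem_Icc.1 hj).2]

lemma exists_partialSum_eq {i : ℕ} (hi : i < m) :
    ∃ j, i < j ∧ j ≤ m ∧ partialSum a j = psiSum m a i + (j - i) * psiT m a (i + 1) := by
  have hne : (slopes m a i).Nonempty := ⟨_, ⟨m, Set.mem_Icc.2 ⟨hi, le_rfl⟩, rfl⟩⟩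
  obtain ⟨j, hj, hval⟩ := hne.csSup_mem ((Set.finite_Icc _ _).image _)
  have hpos : (0 : ℝ) < j - i := sub_pos.2 (Nat.cast_lt.2 (Set.mem_Icc.1 hj).1)
  refine ⟨j, (Set.mem_Icc.1 hj).1, (Set.mem_Icc.1 hj).2, ?_⟩
  rw [psiT_succ, ← hval]
  field_simp
  ring

lemma partialSum_le_psiSum {l : ℕ} (hl : l ≤ m) : partialSum a l ≤ psiSum m a l := by
  cases l with
  | zero => simp [partialSum, psiSum]
  | succ i =>
    have := (isLeast_psiT a (show i < m by omega)).1 (i + 1) (by omega) hl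
    rw [psiSum_succ]
    push_cast at this
    linarith

lemma psiT_antitoneOn : AntitoneOn (psiT m a) (Set.Icc 1 m) := by
  refine antitoneOn_of_succ_le Set.ordConnected_Icc fun i _ hi hi' => ?_
  obtain ⟨i, rfl⟩ : ∃ i', i = i' + 1 := ⟨i - 1, by have := (Set.mem_Icc.1 hi).1; omega⟩
  simp only [Order.succ_eq_add_one, Set.mem_Icc] at hi' ⊢
  refine (isLeast_psiT a (by omega)).2 fun j hij hjm => ?_
  have := (isLeast_psiT a (show i < m by omega)).1 j (by omega) hjm
  rw [psiSum_succ]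
  push_cast
  linarith

lemma psiSum_eq_of_le_of_le {i j : ℕ} (hjm : j ≤ m)
    (hj : partialSum a j = psiSum m a i + (j - i) * psiT m a (i + 1)) {r : ℕ}
    (hir : i ≤ r) (hrj : r ≤ j) : psiSum m a r = psiSum m a i + (r - i) * psiT m a (i + 1) := by
  induction r, hir using Nat.le_induction with
  | base => simp
  | succ r hir ih =>
    have hr := ih (by omega)
    have hslope : psiT m a (r + 1) = psiT m a (i + 1) := by
      refine le_antisymm ((isLeast_psiT a (by omega)).2 fun j' hrj' hj'm => ?_) ?_
      · have := (isLeast_psiT a (show i < m by omega)).1 j' (by omega) hj'm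
        rw [hr]
        linarith
      · have hpos : (0 : ℝ) < j - r := sub_pos.2 (Nat.cast_lt.2 (by omega))
        have := (isLeast_psiT a (show r < m by omega)).1 j (by omega) hjm
        rw [hj, hr] at this
        nlinarith
    rw [psiSum_succ, hslope, hr]
    push_cast
    ring

lemma exists_convex_combination {i l : ℕ} (hi : psiSum m a i = partialSum a i) (hil : i ≤ l)
    (hl : l ≤ m) :
    ∃ p q : ℕ, ∃ β : ℝ, p ≤ l ∧ l ≤ q ∧ q ≤ m ∧ 0 ≤ β ∧ β ≤ 1 ∧
      (1 - β) * p + β * q = l ∧ (1 - β) * partialSum a p + β * partialSum a q = psiSum m a l := by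
  induction hd : m - i using Nat.strong_induction_on generalizing i with
  | _ d ih =>
  rcases hil.eq_or_lt with rfl | hil
  · exact ⟨i, i, 0, le_rfl, le_rfl, hl, le_rfl, zero_le_one, by ring, by rw [hi]; ring⟩
  obtain ⟨j, hij, hjm, hj⟩ := exists_partialSum_eq a (show i < m by omega)
  rcases le_or_gt l j with hlj | hjl
  · have hpos : (0 : ℝ) < j - i := sub_pos.2 (Nat.cast_lt.2 hij)
    have hli : (i : ℝ) ≤ l := Nat.cast_le.2 hil.le
    have hlj' : (l : ℝ) ≤ j := Nat.cast_le.2 hlj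
    refine ⟨i, j, (l - i) / (j - i), hil.le, hlj, hjm, by positivity,
      (div_le_one hpos).2 (by linarith), by field_simp; ring, ?_⟩
    rw [psiSum_eq_of_le_of_le a hjm hj hil.le hlj, hj, ← hi]
    field_simp
    ring
  · exact ih (m - j) (by omega) (by rw [hj, psiSum_eq_of_le_of_le a hjm hj hij.le le_rfl])
      hjl.le rfl

lemma sum_mul_partialSum_le (x : ℕ → ℝ) (hx : ∀ n ∈ range (m + 1), 0 ≤ x n) :
    ∑ n ∈ range (m + 1), x n * partialSum a n ≤ ∑ n ∈ range (m + 1), x n * psiSum m a n :=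
  sum_le_sum fun n hn => mul_le_mul_of_nonneg_left
    (partialSum_le_psiSum a (Nat.lt_succ_iff.1 (mem_range.1 hn))) (hx n hn)

lemma exists_distrib_psiSum {l : ℕ} (hl : l ≤ m) :
    ∃ x : ℕ → ℝ, (∀ n, 0 ≤ x n ∧ x n ≤ 1) ∧ ∑ n ∈ range (m + 1), x n = 1 ∧
      ∑ n ∈ range (m + 1), (n : ℝ) * x n = l ∧
      ∑ n ∈ range (m + 1), x n * partialSum a n = psiSum m a l := by
  obtain ⟨p, q, β, hpl, hlq, hqm, hβ0, hβ1, hmean, hval⟩ :=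
    exists_convex_combination a (i := 0) (by simp [psiSum, partialSum]) (Nat.zero_le l) hl
  set x : ℕ → ℝ := fun n => (if n = p then 1 - β else 0) + (if n = q then β else 0)
  have hsum (f : ℕ → ℝ) : ∑ n ∈ range (m + 1), x n * f n = (1 - β) * f p + β * f q := by
    simp only [x, add_mul, ite_mul, zero_mul, sum_add_distrib, sum_ite_eq',
      mem_range.2 (Nat.lt_succ_of_le (hpl.trans (hlq.trans hqm))),
      mem_range.2 (Nat.lt_succ_of_le hqm), if_true]
  refine ⟨x, fun n => ?_, ?_, ?_, ?_⟩
  · simp only [x]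
    split_ifs <;> constructor <;> linarith
  · simpa using hsum 1
  · simpa [mul_comm] using (hsum Nat.cast).trans hmean
  · exact (hsum _).trans hval

lemma partialSum_sub_pred (f : ℕ → ℝ) (l : ℕ) :
    partialSum (fun j => f (j - 1) - f j) l = f 0 - f l := by
  induction l with
  | zero => simp [partialSum]
  | succ l ih =>
    rw [partialSum, sum_Icc_succ_top (by omega), ← partialSum, ih, Nat.add_sub_cancel]
    ring

lemma sum_mul_eq_sub_sum_mul_partialSum (f x : ℕ → ℝ) {M : ℕ}
    (hx : ∑ n ∈ range (M + 1), x n = 1) :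
    ∑ n ∈ range (M + 1), x n * f n
      = f 0 - ∑ n ∈ range (M + 1), x n * partialSum (fun j => f (j - 1) - f j) n := by
  simp only [partialSum_sub_pred, mul_sub, sum_sub_distrib, ← sum_mul, hx, one_mul,
    sub_sub_cancel]

end PsiTilde

lemma exists_separating_of_bdd {α : Type*} [ConditionallyCompleteLattice α] {A B : Set α}
    (hB : BddAbove B) (hA : BddBelow A) (h : ∀ b ∈ B, ∀ a ∈ A, b ≤ a) :
    ∃ c, (∀ b ∈ B, b ≤ c) ∧ ∀ a ∈ A, c ≤ a := by
  rcases B.eq_empty_or_nonempty with rfl | hBne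
  · obtain ⟨c, hc⟩ := hA
    exact ⟨c, by simp, hc⟩
  · exact ⟨sSup B, fun b hb => le_csSup hB hb, fun a ha => csSup_le hBne fun b hb => h b hb a ha⟩

lemma sum_Icc_sub_mul_le_of_threshold {g : ℕ → ℝ} {c : ℝ} {p n : ℕ}
    (hle : ∀ j, 1 ≤ j → j ≤ p → c ≤ g j) (hge : ∀ j, p < j → j ≤ n → g j ≤ c) :
    ∑ j ∈ Icc 1 n, g j - c * n ≤ ∑ j ∈ Icc 1 p, g j - c * p := by
  have hsub (r : ℕ) : ∑ j ∈ Icc 1 r, g j - c * r = ∑ j ∈ Ioc 0 r, (g j - c) := by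
    rw [← Icc_add_one_left_eq_Ioc, sum_sub_distrib, sum_const, Nat.card_Icc, nsmul_eq_mul]
    push_cast
    ring
  rw [hsub, hsub]
  rcases le_total n p with hnp | hpn
  · rw [← sum_Ioc_consecutive _ (Nat.zero_le n) hnp, le_add_iff_nonneg_right]
    exact sum_nonneg fun j hj => by
      have := mem_Ioc.1 hj
      linarith [hle j (by omega) this.2]
  · rw [← sum_Ioc_consecutive _ (Nat.zero_le p) hpn, add_le_iff_nonpos_right]
    exact sum_nonpos fun j hj => by
      have := mem_Ioc.1 hj
      linarith [hge j this.1 this.2]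

lemma le_sum_min_of_le_sum {ι : Type*} [Fintype ι] {m : ι → ℕ} {K : ℕ}
    (hK : K ≤ ∑ i, m i) : K ≤ ∑ i, min (m i) K := by
  by_cases h : ∃ i, K ≤ m i
  · obtain ⟨i, hi⟩ := h
    calc K = min (m i) K := (min_eq_right hi).symm
      _ ≤ ∑ i, min (m i) K :=
        single_le_sum (f := fun i => min (m i) K) (fun _ _ => Nat.zero_le _) (mem_univ i)
  · simp only [not_exists, not_le] at h
    simpa [min_eq_left (h _).le] using hK

namespace Allocation

variable {ι : Type*} [Fintype ι]

def allocations (m : ι → ℕ) (K : ℕ) : Set (ι → ℕ) := {l | (∀ i, l i ≤ m i) ∧ ∑ i, l i = K}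

noncomputable def value (g : ι → ℕ → ℝ) (l : ι → ℕ) : ℝ := ∑ i, ∑ j ∈ Icc 1 (l i), g i j

variable {m : ι → ℕ} {K : ℕ}

lemma allocations_finite (m : ι → ℕ) (K : ℕ) : (allocations m K).Finite :=
  (Set.Finite.pi fun i => Set.finite_Iic (m i)).subset fun _ hl => Set.mem_univ_pi.2 hl.1

lemma allocations_nonempty [DecidableEq ι] (hK : K ≤ ∑ i, m i) :
    (allocations m K).Nonempty := by
  induction K with
  | zero => exact ⟨0, fun _ => Nat.zero_le _, by simp⟩
  | succ K ih =>
    obtain ⟨l, hlm, hlK⟩ := ih (by omega)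
    obtain ⟨i, hi⟩ : ∃ i, l i < m i := by
      by_contra! h
      have := sum_le_sum fun i (_ : i ∈ univ) => h i
      omega
    refine ⟨l + Pi.single i 1, fun t => ?_, ?_⟩
    · rcases eq_or_ne t i with rfl | ht
      · simpa using hi
      · simpa [ht] using hlm t
    · simp only [Pi.add_apply]
      rw [sum_add_distrib, sum_pi_single', if_pos (mem_univ i), hlK]

lemma exists_isMaxOn (g : ι → ℕ → ℝ) (hK : (allocations m K).Nonempty) :
    ∃ l ∈ allocations m K, IsMaxOn (value g) (allocations m K) l := by
  obtain ⟨l, hl, hmax⟩ := Set.exists_max_image _ (value g) (allocations_finite m K) hK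
  exact ⟨l, hl, isMaxOn_iff.2 hmax⟩

variable {g : ι → ℕ → ℝ} {l : ι → ℕ}

/-- Moving one unit from `i'` to `i` cannot improve an optimal allocation. -/
lemma succ_le_of_isMaxOn [DecidableEq ι] (hl : l ∈ allocations m K)
    (hmax : IsMaxOn (value g) (allocations m K) l) {i i' : ι} (hne : i ≠ i')
    (hi : l i < m i) (hi' : 1 ≤ l i') : g i (l i + 1) ≤ g i' (l i') := by
  obtain ⟨c, hc⟩ : ∃ c, l i' = c + 1 := ⟨l i' - 1, by omega⟩
  set l' : ι → ℕ := fun t => if t = i then l i + 1 else if t = i' then c else l t with hl'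
  have hcount (t : ι) : l' t + (if t = i' then 1 else 0) = l t + (if t = i then 1 else 0) := by
    by_cases h : t = i
    · subst h; simp [hl', hne]
    · by_cases h' : t = i' <;> simp_all
  have hval (t : ι) : ∑ j ∈ Icc 1 (l' t), g t j + (if t = i' then g i' (l i') else 0)
      = ∑ j ∈ Icc 1 (l t), g t j + (if t = i then g i (l i + 1) else 0) := by
    by_cases h : t = i
    · subst h; simp [hl', hne, sum_Icc_succ_top]
    · by_cases h' : t = i'
      · subst h'; simp [hl', h, hc, sum_Icc_succ_top]
      · simp [hl', h, h']
  have hmem : l' ∈ allocations m K := by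
    refine ⟨fun t => ?_, ?_⟩
    · by_cases h : t = i
      · subst h; simpa [hl'] using hi
      · by_cases h' : t = i'
        · subst h'
          simp only [hl', h, if_false, if_true]
          have := hl.1 t
          omega
        · simpa [hl', h, h'] using hl.1 t
    · have := sum_congr rfl fun t (_ : t ∈ univ) => hcount t
      simp only [sum_add_distrib, sum_ite_eq', if_pos (mem_univ _)] at this
      have := hl.2
      omega
  have hsum := sum_congr rfl fun t (_ : t ∈ univ) => hval t
  simp only [sum_add_distrib, sum_ite_eq', if_pos (mem_univ _)] at hsum
  have := hmax hmem
  simp only [Set.mem_ofPred_eq, value] at this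
  linarith

/-- Lagrange multiplier of the constraint `∑ i, l i = K` at an optimal allocation. -/
lemma exists_threshold (hg : ∀ i, AntitoneOn (g i) (Set.Icc 1 (m i)))
    (hl : l ∈ allocations m K) (hmax : IsMaxOn (value g) (allocations m K) l) :
    ∃ c, (∀ i j, 1 ≤ j → j ≤ l i → c ≤ g i j) ∧ (∀ i j, l i < j → j ≤ m i → g i j ≤ c) := by
  classical
  have key : ∀ i j i' j', 1 ≤ j → j ≤ l i → l i' < j' → j' ≤ m i' → g i' j' ≤ g i j := by
    intro i j i' j' hj hji hj' hj'm
    have hli := hl.1 i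
    rcases eq_or_ne i' i with rfl | hne
    · exact hg i' ⟨hj, by omega⟩ ⟨by omega, hj'm⟩ (by omega)
    calc g i' j' ≤ g i' (l i' + 1) := hg i' ⟨by omega, by omega⟩ ⟨by omega, hj'm⟩ hj'
      _ ≤ g i (l i) := succ_le_of_isMaxOn hl hmax hne (by omega) (by omega)
      _ ≤ g i j := hg i ⟨hj, by omega⟩ ⟨by omega, hli⟩ hji
  obtain ⟨c, hB, hA⟩ := exists_separating_of_bdd
    (B := ⋃ i, g i '' Set.Ioc (l i) (m i)) (A := ⋃ i, g i '' Set.Icc 1 (l i))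
    (Set.finite_iUnion fun i => (Set.finite_Ioc _ _).image _).bddAbove
    (Set.finite_iUnion fun i => (Set.finite_Icc _ _).image _).bddBelow
    (by
      simp only [Set.mem_iUnion, Set.mem_image, Set.mem_Ioc, Set.mem_Icc]
      rintro _ ⟨i', j', ⟨hj', hj'm⟩, rfl⟩ _ ⟨i, j, ⟨hj, hji⟩, rfl⟩
      exact key i j i' j' hj hji hj' hj'm)
  exact ⟨c, fun i j hj hji => hA _ (Set.mem_iUnion.2 ⟨i, j, ⟨hj, hji⟩, rfl⟩),
    fun i j hj hjm => hB _ (Set.mem_iUnion.2 ⟨i, j, ⟨hj, hjm⟩, rfl⟩)⟩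

/-- An optimal integral allocation also solves the fractional relaxation. -/
lemma sum_mul_le_value (hg : ∀ i, AntitoneOn (g i) (Set.Icc 1 (m i)))
    (hl : l ∈ allocations m K) (hmax : IsMaxOn (value g) (allocations m K) l)
    (x : ι → ℕ → ℝ) (hx0 : ∀ i, ∀ n ∈ range (m i + 1), 0 ≤ x i n)
    (hx1 : ∀ i, ∑ n ∈ range (m i + 1), x i n = 1)
    (hxK : ∑ i, ∑ n ∈ range (m i + 1), (n : ℝ) * x i n = K) :
    ∑ i, ∑ n ∈ range (m i + 1), x i n * ∑ j ∈ Icc 1 n, g i j ≤ value g l := by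
  obtain ⟨c, hc, hc'⟩ := exists_threshold hg hl hmax
  set V : ι → ℝ := fun i => ∑ j ∈ Icc 1 (l i), g i j - c * l i
  have hpt (i : ι) (n : ℕ) (hn : n ∈ range (m i + 1)) :
      x i n * ∑ j ∈ Icc 1 n, g i j ≤ x i n * V i + c * (n * x i n) := by
    have := sum_Icc_sub_mul_le_of_threshold (hc i) (n := n)
      fun j hj hjn => hc' i j hj (by have := mem_range.1 hn; omega)
    nlinarith [hx0 i n hn]
  have hlK : ∑ i, (l i : ℝ) = K := by exact_mod_cast hl.2
  calc ∑ i, ∑ n ∈ range (m i + 1), x i n * ∑ j ∈ Icc 1 n, g i j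
      ≤ ∑ i, ∑ n ∈ range (m i + 1), (x i n * V i + c * (n * x i n)) :=
        sum_le_sum fun i _ => sum_le_sum (hpt i)
    _ = ∑ i, V i + c * K := by
        simp only [sum_add_distrib, ← sum_mul, ← mul_sum, hx1, one_mul, hxK]
    _ = value g l := by
        simp only [V, value, sum_sub_distrib, ← mul_sum, hlK]
        ring

end Allocation

open PsiTilde Allocation

theorem stmt6_general (S : ℕ) (n : Fin S → ℕ)
    (k : ℕ) (hk : k ≤ ∑ s, n s) (ts : Fin S → ℕ → ℝ) :
    let N := ∑ s, n s
    let nsk : Fin S → ℕ := fun s => min (n s) (N - k)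
    let Δ : Fin S → ℕ → ℝ := fun s j => ts s (j - 1) - ts s j
    sInf {v : ℝ | ∃ x : Fin S → ℕ → ℝ,
        (∀ s, ∀ l ∈ Finset.range (nsk s + 1), 0 ≤ x s l ∧ x s l ≤ 1) ∧
        (∀ s, ∑ l ∈ Finset.range (nsk s + 1), x s l = 1) ∧
        (∑ s, ∑ l ∈ Finset.range (nsk s + 1), (l : ℝ) * x s l = (N : ℝ) - (k : ℝ)) ∧
        v = ∑ s, ∑ l ∈ Finset.range (nsk s + 1), x s l * ts s l} =
      (∑ s, ts s 0) -
        sSup {w : ℝ | ∃ l : Fin S → ℕ, (∀ s, l s ≤ nsk s) ∧ (∑ s, l s = N - k) ∧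
          w = ∑ s, ∑ j ∈ Finset.Icc 1 (l s), psiT (nsk s) (Δ s) j} := by
  intro N nsk Δ
  have hK : ((N - k : ℕ) : ℝ) = N - k := Nat.cast_sub hk
  obtain ⟨l, hl, hmax⟩ := exists_isMaxOn (fun s => psiT (nsk s) (Δ s))
    (allocations_nonempty (m := nsk) (le_sum_min_of_le_sum (Nat.sub_le N k)))
  rw [IsGreatest.csSup_eq (a := value (fun s => psiT (nsk s) (Δ s)) l)]
  swap
  · exact ⟨⟨l, hl.1, hl.2, rfl⟩, by rintro _ ⟨l', h1, h2, rfl⟩; exact hmax ⟨h1, h2⟩⟩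
  refine IsLeast.csInf_eq ⟨?_, ?_⟩
  · choose x hx01 hx1 hxmean hxval using fun s => exists_distrib_psiSum (Δ s) (hl.1 s)
    refine ⟨x, fun s n _ => hx01 s n, hx1, ?_, ?_⟩
    · rw [sum_congr rfl fun s _ => hxmean s, ← hK]
      exact_mod_cast hl.2
    · rw [sum_congr rfl fun s _ => sum_mul_eq_sub_sum_mul_partialSum (ts s) (x s) (hx1 s),
        sum_sub_distrib]
      simp only [value, ← psiSum_eq_sum_psiT]
      exact congrArg _ (sum_congr rfl fun s _ => (hxval s).symm)
  · rintro _ ⟨x, hx01, hx1, hxK, rfl⟩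
    have hpsi := sum_mul_le_value (fun s => psiT_antitoneOn (Δ s)) hl hmax x
      (fun s n hn => (hx01 s n hn).1) hx1 (by rw [hxK, hK])
    simp only [← psiSum_eq_sum_psiT] at hpsi
    have hmaj := sum_le_sum fun s (_ : s ∈ univ) =>
      sum_mul_partialSum_le (Δ s) (x s) fun n hn => (hx01 s n hn).1
    rw [sum_congr rfl fun s _ => sum_mul_eq_sub_sum_mul_partialSum (ts s) (x s) (hx1 s),
      sum_sub_distrib]
    linarith

/-- The greedy algorithm based on the optimal monotone dominating transformation solves
the linear-programming relaxation exactly: the optimal LP value equals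
`Σ_s t_s(0) −` the greedy maximum of the summed transformed increments. -/
theorem stmt6 (S : ℕ) (hS : 1 ≤ S) (n : Fin S → ℕ) (hn : ∀ s, 1 ≤ n s)
    (k : ℕ) (hk : k ≤ ∑ s, n s) (ts : Fin S → ℕ → ℝ) :
    let N := ∑ s, n s
    let nsk : Fin S → ℕ := fun s => min (n s) (N - k)
    let Δ : Fin S → ℕ → ℝ := fun s j => ts s (j - 1) - ts s j
    sInf {v : ℝ | ∃ x : Fin S → ℕ → ℝ,
        (∀ s, ∀ l ∈ Finset.range (nsk s + 1), 0 ≤ x s l ∧ x s l ≤ 1) ∧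
        (∀ s, ∑ l ∈ Finset.range (nsk s + 1), x s l = 1) ∧
        (∑ s, ∑ l ∈ Finset.range (nsk s + 1), (l : ℝ) * x s l = (N : ℝ) - (k : ℝ)) ∧
        v = ∑ s, ∑ l ∈ Finset.range (nsk s + 1), x s l * ts s l} =
      (∑ s, ts s 0) -
        sSup {w : ℝ | ∃ l : Fin S → ℕ, (∀ s, l s ≤ nsk s) ∧ (∑ s, l s = N - k) ∧
          w = ∑ s, ∑ j ∈ Finset.Icc 1 (l s), psiT (nsk s) (Δ s) j} :=
  stmt6_general S n k hk ts
end

section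
/- For every y ∈ ℝ^n, d̲(z, y) ≤ d(z, y) ≤ d̄(z, y). (Ranking tied units with treated units last gives the largest rank-sum statistic, ranking them first gives the smallest, and any fixed-ordering tie-break lies in between.) -/
open Finset

/-- Rank with ties broken by a fixed ordering `π`. -/
noncomputable def rnk1 {n : ℕ} (π : Equiv.Perm (Fin n)) (y : Fin n → ℝ) (i : Fin n) : ℕ :=
  (Finset.univ.filter fun j => y j < y i ∨ (y j = y i ∧ π j ≤ π i)).card

/-- Rank with ties broken placing control units (z = false) before treated units. -/
noncomputable def rnk1Bar {n : ℕ} (z : Fin n → Bool) (π : Equiv.Perm (Fin n))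
    (y : Fin n → ℝ) (i : Fin n) : ℕ :=
  (Finset.univ.filter fun j => y j < y i ∨ (y j = y i ∧ z j = false ∧ z i = true) ∨
    (y j = y i ∧ z j = z i ∧ π j ≤ π i)).card

/-- Rank with ties broken placing treated units (z = true) before control units. -/
noncomputable def rnk1Low {n : ℕ} (z : Fin n → Bool) (π : Equiv.Perm (Fin n))
    (y : Fin n → ℝ) (i : Fin n) : ℕ :=
  (Finset.univ.filter fun j => y j < y i ∨ (y j = y i ∧ z j = true ∧ z i = false) ∨
    (y j = y i ∧ z j = z i ∧ π j ≤ π i)).card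

/-!
Pointwise comparison of ranks: for a treated unit `i`, every unit counted in `rnk1Low … i` is
counted in `rnk1 … i` (the treated-first clause never fires for treated `i`), and every unit counted
in `rnk1 … i` is counted in `rnk1Bar … i` (a tied control unit always is). Summing `φ`, monotone on
`{1, …, n}`, over the treated units gives the two inequalities.
-/

section Ranks

variable {n : ℕ} (z : Fin n → Bool) (π : Equiv.Perm (Fin n)) (y : Fin n → ℝ) (i : Fin n)

lemma one_le_rnk1 : 1 ≤ rnk1 π y i :=
  card_pos.mpr ⟨i, by simp⟩

lemma one_le_rnk1Low : 1 ≤ rnk1Low z π y i :=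
  card_pos.mpr ⟨i, by simp⟩

lemma rnk1_le : rnk1 π y i ≤ n :=
  (card_filter_le _ _).trans_eq (card_fin n)

lemma rnk1Bar_le : rnk1Bar z π y i ≤ n :=
  (card_filter_le _ _).trans_eq (card_fin n)

variable {z i}

lemma rnk1Low_le_rnk1 (hi : z i = true) : rnk1Low z π y i ≤ rnk1 π y i := by
  refine card_le_card (monotone_filter_right _ fun j _ hj => ?_)
  rcases hj with hlt | ⟨-, -, hzi⟩ | ⟨heq, -, hπ⟩
  · exact Or.inl hlt
  · simp [hi] at hzi
  · exact Or.inr ⟨heq, hπ⟩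

lemma rnk1_le_rnk1Bar (hi : z i = true) : rnk1 π y i ≤ rnk1Bar z π y i := by
  refine card_le_card (monotone_filter_right _ fun j _ hj => ?_)
  rcases hj with hlt | ⟨heq, hπ⟩
  · exact Or.inl hlt
  · cases hzj : z j
    · exact Or.inr (Or.inl ⟨heq, rfl, hi⟩)
    · exact Or.inr (Or.inr ⟨heq, hi.symm, hπ⟩)

end Ranks

lemma sum_ite_le_sum_ite_of_le_on_true {n : ℕ} (z : Fin n → Bool) (φ : ℕ → ℝ)
    (hφ : ∀ a b : ℕ, 1 ≤ a → a ≤ b → b ≤ n → φ a ≤ φ b) (r s : Fin n → ℕ)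
    (hr : ∀ i, 1 ≤ r i) (hs : ∀ i, s i ≤ n) (hrs : ∀ i, z i = true → r i ≤ s i) :
    (∑ i, if z i then φ (r i) else 0) ≤ ∑ i, if z i then φ (s i) else 0 := by
  refine sum_le_sum fun i _ => ?_
  cases hi : z i
  · simp
  · simpa using hφ _ _ (hr i) (hrs i hi) (hs i)

theorem stmt8_general (n : ℕ) (z : Fin n → Bool) (π : Equiv.Perm (Fin n))
    (φ : ℕ → ℝ) (hφ : ∀ a b : ℕ, 1 ≤ a → a ≤ b → b ≤ n → φ a ≤ φ b)
    (y : Fin n → ℝ) :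
    (∑ i, if z i then φ (rnk1Low z π y i) else 0) ≤
      (∑ i, if z i then φ (rnk1 π y i) else 0) ∧
    (∑ i, if z i then φ (rnk1 π y i) else 0) ≤
      (∑ i, if z i then φ (rnk1Bar z π y i) else 0) :=
  ⟨sum_ite_le_sum_ite_of_le_on_true z φ hφ _ _ (one_le_rnk1Low z π y) (rnk1_le π y)
      fun _ => rnk1Low_le_rnk1 π y,
    sum_ite_le_sum_ite_of_le_on_true z φ hφ _ _ (one_le_rnk1 π y) (rnk1Bar_le z π y)
      fun _ => rnk1_le_rnk1Bar π y⟩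

/-- Ranking tied units with treated units last gives the largest rank-sum statistic,
ranking them first gives the smallest, and any fixed-ordering tie-break lies between:
`d̲(z,y) ≤ d(z,y) ≤ d̄(z,y)`. -/
theorem stmt8 (n : ℕ) (hn : 1 ≤ n) (z : Fin n → Bool) (π : Equiv.Perm (Fin n))
    (φ : ℕ → ℝ) (hφ : ∀ a b : ℕ, 1 ≤ a → a ≤ b → b ≤ n → φ a ≤ φ b)
    (y : Fin n → ℝ) :
    (∑ i, if z i then φ (rnk1Low z π y i) else 0) ≤
      (∑ i, if z i then φ (rnk1 π y i) else 0) ∧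
    (∑ i, if z i then φ (rnk1 π y i) else 0) ≤
      (∑ i, if z i then φ (rnk1Bar z π y i) else 0) :=
  stmt8_general n z π φ hφ y
end

section
/- For every y ∈ ℝ^n and every real a > 0, d̄(z, y) ≤ d̲(z, y + a·z), where y + a·z is the vector with coordinates y_i + a·z_i (i.e., the outcomes of treated units are shifted up by a). -/
open Finset

lemma one_le_rnk1Bar {n : ℕ} (z : Fin n → Bool) (π : Equiv.Perm (Fin n)) (y : Fin n → ℝ)
    (i : Fin n) : 1 ≤ rnk1Bar z π y i :=
  card_pos.mpr ⟨i, by simp⟩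

lemma rnk1Low_le {n : ℕ} (z : Fin n → Bool) (π : Equiv.Perm (Fin n)) (y : Fin n → ℝ)
    (i : Fin n) : rnk1Low z π y i ≤ n :=
  (card_filter_le _ _).trans (card_fin n).le

/-- The shift moves `i` strictly above every control unit tied with it (this is where `0 < a`
enters), while treated units tied with `i` keep their `π`-order. -/
lemma rnk1Bar_le_rnk1Low_shift {n : ℕ} (z : Fin n → Bool) (π : Equiv.Perm (Fin n))
    (y : Fin n → ℝ) {a : ℝ} (ha : 0 < a) {i : Fin n} (hi : z i = true) :
    rnk1Bar z π y i ≤ rnk1Low z π (fun j => y j + if z j then a else 0) i := by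
  refine card_le_card fun j hj => ?_
  simp only [mem_filter, mem_univ, true_and, hi] at hj ⊢
  cases hj' : z j <;> simp only [hj', if_true, if_false, Bool.false_eq_true, add_zero] at hj ⊢
  · rcases hj with h | ⟨h, -⟩ | ⟨-, h, -⟩
    · exact Or.inl (by linarith)
    · exact Or.inl (by linarith)
    · nomatch h
  · rcases hj with h | ⟨-, h, -⟩ | ⟨h, -, hπ⟩
    · exact Or.inl (by linarith)
    · nomatch h
    · exact Or.inr (Or.inr ⟨by rw [h], trivial, hπ⟩)

theorem stmt9_general (n : ℕ) (z : Fin n → Bool) (π : Equiv.Perm (Fin n))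
    (φ : ℕ → ℝ) (hφ : ∀ a b : ℕ, 1 ≤ a → a ≤ b → b ≤ n → φ a ≤ φ b)
    (y : Fin n → ℝ) (a : ℝ) (ha : 0 < a) :
    (∑ i, if z i then φ (rnk1Bar z π y i) else 0) ≤
      (∑ i, if z i then
        φ (rnk1Low z π (fun j => y j + if z j then a else 0) i) else 0) := by
  refine sum_le_sum fun i _ => ?_
  split_ifs with hi
  · exact hφ _ _ (one_le_rnk1Bar z π y i) (rnk1Bar_le_rnk1Low_shift z π y ha hi)
      (rnk1Low_le z π _ i)
  · rfl

/-- Shifting the treated outcomes up by any `a > 0` turns the upper tie-break statistic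
into a lower bound for the lower tie-break statistic: `d̄(z, y) ≤ d̲(z, y + a·z)`. -/
theorem stmt9 (n : ℕ) (hn : 1 ≤ n) (z : Fin n → Bool) (π : Equiv.Perm (Fin n))
    (φ : ℕ → ℝ) (hφ : ∀ a b : ℕ, 1 ≤ a → a ≤ b → b ≤ n → φ a ≤ φ b)
    (y : Fin n → ℝ) (a : ℝ) (ha : 0 < a) :
    (∑ i, if z i then φ (rnk1Bar z π y i) else 0) ≤
      (∑ i, if z i then
        φ (rnk1Low z π (fun j => y j + if z j then a else 0) i) else 0) :=
  stmt9_general n z π φ hφ y a ha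
end

section
/- Let n_1,…,n_S ≥ 1 be integers with N = Σ_s n_s, identify ℝ^N with ∏_{s=1}^S ℝ^{n_s} via stratum blocks, fix c ∈ ℝ and an integer 0 ≤ k ≤ N, and let f_s : ℝ^{n_s} → ℝ be functions each taking only finitely many values. Define t_s(l) = inf{ f_s(δ_s) : δ_s ∈ ℝ^{n_s}, #{i : δ_{si} > c} ≤ l } for integers 0 ≤ l ≤ n_s. Then inf{ Σ_{s=1}^S f_s(δ_s) : δ ∈ H_{k,c} } = min{ Σ_{s=1}^S t_s(l_s) : (l_1,…,l_S) ∈ K_n(N−k) }, and the infimum on the left-hand side is attained. -/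
/-!
Every feasible `δ` spends a budget `a_s = #{i : δ_{si} > c}` in each stratum with
`Σ a_s ≤ N − k`; raising these budgets to an allocation `l ∈ K_n(N − k)` gives
`Σ t_s(l_s) ≤ Σ f_s(δ_s)`. Conversely, for any allocation `l`, gluing per-stratum
minimisers of `t_s(l_s)` is feasible and realises `Σ t_s(l_s)` exactly. All values
involved lie in the finite set of sums of values of the `f_s`, so both infima are minima.
-/

open Finset

theorem Finset.exists_le_le_sum_eq {ι : Type*} [DecidableEq ι] (s : Finset ι)
    {a b : ι → ℕ} (hab : ∀ i ∈ s, a i ≤ b i) {m : ℕ}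
    (ham : ∑ i ∈ s, a i ≤ m) (hmb : m ≤ ∑ i ∈ s, b i) :
    ∃ l : ι → ℕ, (∀ i ∈ s, a i ≤ l i ∧ l i ≤ b i) ∧ ∑ i ∈ s, l i = m := by
  induction s using Finset.induction_on generalizing m with
  | empty => exact ⟨a, by simp, by rw [sum_empty] at hmb ⊢; omega⟩
  | insert j s hj ih =>
    rw [sum_insert hj] at ham hmb
    have hab_s : ∀ i ∈ s, a i ≤ b i := fun i hi => hab i (mem_insert_of_mem hi)
    have hj_le : a j ≤ b j := hab j (mem_insert_self j s)
    have hsum_le : ∑ i ∈ s, a i ≤ ∑ i ∈ s, b i := sum_le_sum hab_s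
    -- this choice keeps the remaining budget `m - x` between `∑ a` and `∑ b` over `s`
    set x := min (b j) (m - ∑ i ∈ s, a i)
    obtain ⟨l, hl, hl_sum⟩ := ih hab_s (m := m - x) (by omega) (by omega)
    refine ⟨fun i => if i = j then x else l i, ?_, ?_⟩
    · intro i hi
      rcases mem_insert.mp hi with rfl | hi
      · dsimp only; rw [if_pos rfl]; omega
      · simpa [ne_of_mem_of_not_mem hi hj] using hl i hi
    · rw [sum_insert hj, if_pos rfl,
        sum_congr rfl fun i hi => if_neg (ne_of_mem_of_not_mem hi hj), hl_sum]
      omega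

section BudgetedMinimum

variable {ι : Type*} {X : ι → Type*} (g : ∀ i, X i → ℕ) (f : ∀ i, X i → ℝ)

/-- The paper's `t_s(l)`, with cost `g s δ = #{i : δ_i > c}`. -/
noncomputable def budgetMin (i : ι) (l : ℕ) : ℝ :=
  sInf {v : ℝ | ∃ x, g i x ≤ l ∧ v = f i x}

variable {g f}

theorem finite_budgetValues {i : ι} (hf : (Set.range (f i)).Finite) (l : ℕ) :
    {v : ℝ | ∃ x, g i x ≤ l ∧ v = f i x}.Finite :=
  hf.subset (by rintro _ ⟨y, -, rfl⟩; exact ⟨y, rfl⟩)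

theorem budgetMin_le {i : ι} (hf : (Set.range (f i)).Finite) {l : ℕ} {x : X i}
    (hx : g i x ≤ l) : budgetMin g f i l ≤ f i x :=
  csInf_le (finite_budgetValues hf l).bddBelow ⟨x, hx, rfl⟩

theorem exists_eq_budgetMin {i : ι} (hf : (Set.range (f i)).Finite) {l : ℕ} {x₀ : X i}
    (hx₀ : g i x₀ ≤ l) : ∃ x, g i x ≤ l ∧ f i x = budgetMin g f i l := by
  have hne : {v : ℝ | ∃ x, g i x ≤ l ∧ v = f i x}.Nonempty := ⟨_, x₀, hx₀, rfl⟩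
  obtain ⟨x, hx, hv⟩ := hne.csInf_mem (finite_budgetValues hf l)
  exact ⟨x, hx, hv.symm⟩

variable [Fintype ι] [DecidableEq ι] {b : ι → ℕ} {m : ℕ}

theorem sInf_sum_le_budget_eq_sInf_sum_budgetMin (hf : ∀ i, (Set.range (f i)).Finite)
    (hg : ∀ i x, g i x ≤ b i) (hg₀ : ∀ i, ∃ x, g i x = 0) (hm : m ≤ ∑ i, b i) :
    sInf {v : ℝ | ∃ x : ∀ i, X i, ∑ i, g i (x i) ≤ m ∧ v = ∑ i, f i (x i)} =
      sInf {v : ℝ | ∃ l : ι → ℕ, (∀ i, l i ≤ b i) ∧ ∑ i, l i = m ∧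
        v = ∑ i, budgetMin g f i (l i)} ∧
    ∃ x : ∀ i, X i, ∑ i, g i (x i) ≤ m ∧
      ∑ i, f i (x i) =
        sInf {v : ℝ | ∃ x : ∀ i, X i, ∑ i, g i (x i) ≤ m ∧ v = ∑ i, f i (x i)} := by
  set A := {v : ℝ | ∃ x : ∀ i, X i, ∑ i, g i (x i) ≤ m ∧ v = ∑ i, f i (x i)}
  set B := {v : ℝ | ∃ l : ι → ℕ, (∀ i, l i ≤ b i) ∧ ∑ i, l i = m ∧
    v = ∑ i, budgetMin g f i (l i)}
  have hA_fin : A.Finite := by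
    refine ((Set.Finite.pi hf).image fun y => ∑ i, y i).subset ?_
    rintro _ ⟨x, -, rfl⟩
    exact ⟨fun i => f i (x i), fun i _ => ⟨x i, rfl⟩, rfl⟩
  choose x₀ hx₀ using hg₀
  have hA_ne : A.Nonempty := ⟨_, x₀, by simp [hx₀], rfl⟩
  have hB_sub : B ⊆ A := by
    rintro _ ⟨l, -, hl_sum, rfl⟩
    choose x hx hfx using fun i =>
      exists_eq_budgetMin (hf i) ((hx₀ i).trans_le (Nat.zero_le (l i)))
    exact ⟨x, hl_sum ▸ sum_le_sum fun i _ => hx i, (sum_congr rfl fun i _ => hfx i).symm⟩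
  have hB_le : ∀ v ∈ A, ∃ w ∈ B, w ≤ v := by
    rintro _ ⟨x, hx, rfl⟩
    obtain ⟨l, hl, hl_sum⟩ := exists_le_le_sum_eq univ (fun i _ => hg i (x i)) hx hm
    exact ⟨_, ⟨l, fun i => (hl i (mem_univ i)).2, hl_sum, rfl⟩,
      sum_le_sum fun i _ => budgetMin_le (hf i) (hl i (mem_univ i)).1⟩
  obtain ⟨x, hx, hx_min⟩ := hA_ne.csInf_mem hA_fin
  obtain ⟨w, hw, hw_le⟩ := hB_le _ ⟨x, hx, hx_min⟩
  refine ⟨le_antisymm ?_ ?_, x, hx, hx_min.symm⟩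
  · exact csInf_le_csInf hA_fin.bddBelow ⟨w, hw⟩ hB_sub
  · exact (csInf_le (hA_fin.subset hB_sub).bddBelow hw).trans hw_le

end BudgetedMinimum

theorem stmt11_general (S : ℕ) (n : Fin S → ℕ)
    (c : ℝ) (k : ℕ)
    (f : ∀ s : Fin S, (Fin (n s) → ℝ) → ℝ)
    (hf : ∀ s, (Set.range (f s)).Finite) :
    let N := ∑ s, n s
    let tl : Fin S → ℕ → ℝ := fun s l =>
      sInf {v : ℝ | ∃ δs : Fin (n s) → ℝ,
        (Finset.univ.filter fun i => c < δs i).card ≤ l ∧ v = f s δs}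
    let LHS := sInf {v : ℝ | ∃ δ : ∀ s, Fin (n s) → ℝ,
        (∑ s, (Finset.univ.filter fun i => c < δ s i).card ≤ N - k) ∧
        v = ∑ s, f s (δ s)}
    (LHS = sInf {v : ℝ | ∃ l : Fin S → ℕ, (∀ s, l s ≤ n s) ∧ (∑ s, l s = N - k) ∧
        v = ∑ s, tl s (l s)}) ∧
    ∃ δ : ∀ s, Fin (n s) → ℝ,
      (∑ s, (Finset.univ.filter fun i => c < δ s i).card ≤ N - k) ∧
      (∑ s, f s (δ s)) = LHS := by
  intro N tl LHS
  have hcount_le : ∀ s (δs : Fin (n s) → ℝ), (univ.filter fun i => c < δs i).card ≤ n s :=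
    fun s δs => (card_filter_le _ _).trans_eq (card_fin (n s))
  have hcount_const : ∀ s, (univ.filter fun i : Fin (n s) => c < c).card = 0 := by simp
  exact sInf_sum_le_budget_eq_sInf_sum_budgetMin (X := fun s => Fin (n s) → ℝ) (b := n)
    (g := fun s δs => (univ.filter fun i => c < δs i).card)
    hf hcount_le (fun s => ⟨fun _ => c, hcount_const s⟩) (Nat.sub_le N k)

/-- The minimization of a separable objective over the composite null set `H_{k,c}`
decomposes into per-stratum minimizations combined over integer allocations, and the
infimum is attained. -/
theorem stmt11 (S : ℕ) (hS : 1 ≤ S) (n : Fin S → ℕ) (hn : ∀ s, 1 ≤ n s)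
    (c : ℝ) (k : ℕ) (hk : k ≤ ∑ s, n s)
    (f : ∀ s : Fin S, (Fin (n s) → ℝ) → ℝ)
    (hf : ∀ s, (Set.range (f s)).Finite) :
    let N := ∑ s, n s
    let tl : Fin S → ℕ → ℝ := fun s l =>
      sInf {v : ℝ | ∃ δs : Fin (n s) → ℝ,
        (Finset.univ.filter fun i => c < δs i).card ≤ l ∧ v = f s δs}
    let LHS := sInf {v : ℝ | ∃ δ : ∀ s, Fin (n s) → ℝ,
        (∑ s, (Finset.univ.filter fun i => c < δ s i).card ≤ N - k) ∧
        v = ∑ s, f s (δ s)}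
    (LHS = sInf {v : ℝ | ∃ l : Fin S → ℕ, (∀ s, l s ≤ n s) ∧ (∑ s, l s = N - k) ∧
        v = ∑ s, tl s (l s)}) ∧
    ∃ δ : ∀ s, Fin (n s) → ℝ,
      (∑ s, (Finset.univ.filter fun i => c < δ s i).card ≤ N - k) ∧
      (∑ s, f s (δ s)) = LHS :=
  stmt11_general S n c k f hf
end

section
/- Let S ≥ 1 and n_1,…,n_S ≥ 1 be integers, N = Σ_s n_s, and for each s let t_s : {0,1,…,n_s} → ℝ be nonincreasing. For an integer 0 ≤ k ≤ N set n_{sk} = min(n_s, N−k) and let T(k) be the optimal value of the linear program min Σ_{s=1}^S Σ_{l=0}^{n_{sk}} x_{sl} t_s(l) over reals x_{sl} ∈ [0,1] with Σ_{l=0}^{n_{sk}} x_{sl} = 1 for every s and Σ_{s=1}^S Σ_{l=0}^{n_{sk}} l·x_{sl} = N−k (the minimum exists, the feasible set being nonempty and compact). Then T(k−1) ≤ T(k) for every 1 ≤ k ≤ N. Moreover, if t̃_s : {0,1,…,n_s} → ℝ (also nonincreasing) satisfy t_s(l) ≤ t̃_s(l) for all s and l, then the corresponding optimal values satisfy T(k)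 ≤ T̃(k) for every 0 ≤ k ≤ N. -/
/-!
Let `m = N - k`. From a feasible point at level `m`, move the same fraction `μ = 1 / (C - m)` of
every stratum's mass onto its new top index `min (n s) (m + 1)`, where
`C = ∑ s, min (n s) (m + 1) ≥ m + 1`. This raises the total mean by exactly one, and since each
`t s` is nonincreasing the new top value is at most the stratum's current average, so the
objective does not increase: `T(k - 1) ≤ T(k)`. Iterating the same move from the point mass at
`0` shows that every level `k ≤ N` is feasible, so the infima are genuine; monotonicity in `t`
is then a pointwise comparison on a common feasible set.
-/

open Finset

theorem csInf_le_csInf_of_forall_exists_le_s12 {s t : Set ℝ} (hs : BddBelow s) (ht : t.Nonempty)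
    (h : ∀ b ∈ t, ∃ a ∈ s, a ≤ b) : sInf s ≤ sInf t :=
  le_csInf ht fun b hb => by
    obtain ⟨a, ha, hab⟩ := h b hb
    exact (csInf_le hs ha).trans hab

theorem le_sum_mul_of_forall_le {α : Type*} {s : Finset α} {p f : α → ℝ} {a : ℝ}
    (hp : ∀ i ∈ s, 0 ≤ p i) (hp1 : ∑ i ∈ s, p i = 1) (ha : ∀ i ∈ s, a ≤ f i) :
    a ≤ ∑ i ∈ s, p i * f i :=
  calc a = ∑ i ∈ s, p i * a := by rw [← sum_mul, hp1, one_mul]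
    _ ≤ ∑ i ∈ s, p i * f i := sum_le_sum fun i hi => mul_le_mul_of_nonneg_left (ha i hi) (hp i hi)

theorem Nat.min_sum_le_sum_min {ι : Type*} (s : Finset ι) (a : ι → ℕ) (b : ℕ) :
    min (∑ i ∈ s, a i) b ≤ ∑ i ∈ s, min (a i) b := by
  classical
  induction s using Finset.induction_on with
  | empty => simp
  | insert i s hi ih => rw [sum_insert hi, sum_insert hi]; omega

-- The truncation discards the values of `p` above `c`, which feasibility leaves unconstrained.
def shiftMass (c c' : ℕ) (μ : ℝ) (p : ℕ → ℝ) (l : ℕ) : ℝ :=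
  (1 - μ) * (if l ≤ c then p l else 0) + if l = c' then μ else 0

theorem sum_shiftMass_mul {c c' : ℕ} (hc : c ≤ c') (μ : ℝ) (p g : ℕ → ℝ) :
    ∑ l ∈ range (c' + 1), shiftMass c c' μ p l * g l
      = (1 - μ) * ∑ l ∈ range (c + 1), p l * g l + μ * g c' := by
  have htrunc : (range (c' + 1)).filter (· ≤ c) = range (c + 1) := by
    ext l; simp only [mem_filter, mem_range]; omega
  simp only [shiftMass, add_mul, mul_assoc, ite_mul, zero_mul, sum_add_distrib, ← mul_sum,
    sum_ite_eq', mem_range, lt_add_one, if_true]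
  rw [← sum_filter, htrunc]

theorem shiftMass_nonneg {c c' : ℕ} {μ : ℝ} (hμ0 : 0 ≤ μ) (hμ1 : μ ≤ 1) {p : ℕ → ℝ}
    (hp : ∀ l ∈ range (c + 1), 0 ≤ p l) (l : ℕ) : 0 ≤ shiftMass c c' μ p l := by
  unfold shiftMass
  refine add_nonneg (mul_nonneg (by linarith) ?_) ?_ <;> split_ifs with h
  exacts [hp l (mem_range.2 (by omega)), le_rfl, hμ0, le_rfl]

section LP

variable {ι : Type*} [Fintype ι] (n : ι → ℕ)

def IsFeasible (m : ℕ) (x : ι → ℕ → ℝ) : Prop :=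
  (∀ s, ∀ l ∈ range (min (n s) m + 1), 0 ≤ x s l ∧ x s l ≤ 1) ∧
  (∀ s, ∑ l ∈ range (min (n s) m + 1), x s l = 1) ∧
  ∑ s, ∑ l ∈ range (min (n s) m + 1), (l : ℝ) * x s l = m

def lpObjective (m : ℕ) (f : ι → ℕ → ℝ) (x : ι → ℕ → ℝ) : ℝ :=
  ∑ s, ∑ l ∈ range (min (n s) m + 1), x s l * f s l

/-- `lpValue n (N - k) t` is the paper's `T(k)`, with `N = ∑ s, n s`. -/
noncomputable def lpValue (m : ℕ) (f : ι → ℕ → ℝ) : ℝ :=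
  sInf (lpObjective n m f '' {x | IsFeasible n m x})

variable {n}

theorem isFeasible_zero : IsFeasible n 0 fun _ l => if l = 0 then 1 else 0 := by
  simp [IsFeasible]

theorem IsFeasible.sum_apply_le_lpObjective {m : ℕ} {x : ι → ℕ → ℝ} (hx : IsFeasible n m x)
    {f : ι → ℕ → ℝ} (hf : ∀ s, AntitoneOn (f s) (Set.Iic (n s))) :
    ∑ s, f s (n s) ≤ lpObjective n m f x :=
  sum_le_sum fun s _ => le_sum_mul_of_forall_le (fun l hl => (hx.1 s l hl).1) (hx.2.1 s)
    fun l hl => by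
      have hl : l ≤ n s := by have := mem_range.1 hl; omega
      exact hf s hl Set.self_mem_Iic hl

theorem IsFeasible.exists_succ {m : ℕ} {x : ι → ℕ → ℝ} (hx : IsFeasible n m x)
    (hm : m + 1 ≤ ∑ s, n s) :
    ∃ y, IsFeasible n (m + 1) y ∧ ∀ f : ι → ℕ → ℝ, (∀ s, AntitoneOn (f s) (Set.Iic (n s))) →
      lpObjective n (m + 1) f y ≤ lpObjective n m f x := by
  obtain ⟨hx01, hx1, hxmean⟩ := hx
  set C := ∑ s, min (n s) (m + 1)
  have hC : (m : ℝ) + 1 ≤ C := by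
    have := Nat.min_sum_le_sum_min univ n (m + 1)
    rw [min_eq_right hm] at this
    exact_mod_cast this
  have hCm : 0 < (C : ℝ) - m := by linarith
  set μ : ℝ := 1 / (C - m)
  have hμ0 : 0 ≤ μ := div_nonneg zero_le_one hCm.le
  have hμ1 : μ ≤ 1 := (div_le_one₀ hCm).2 (by linarith)
  have hμC : μ * (C - m) = 1 := div_mul_cancel₀ 1 hCm.ne'
  have hcc : ∀ s, min (n s) m ≤ min (n s) (m + 1) := fun s => by omega
  set y := fun s => shiftMass (min (n s) m) (min (n s) (m + 1)) μ (x s)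
  have hy0 : ∀ s l, 0 ≤ y s l := fun s =>
    shiftMass_nonneg hμ0 hμ1 fun l hl => (hx01 s l hl).1
  have hy1 : ∀ s, ∑ l ∈ range (min (n s) (m + 1) + 1), y s l = 1 := fun s => by
    simpa [hx1 s] using sum_shiftMass_mul (hcc s) μ (x s) 1
  refine ⟨y, ⟨fun s l hl => ⟨hy0 s l, ?_⟩, hy1, ?_⟩, fun f hf => ?_⟩
  · rw [← hy1 s]
    exact single_le_sum (fun l _ => hy0 s l) hl
  · have hmean : ∀ s, ∑ l ∈ range (min (n s) (m + 1) + 1), (l : ℝ) * y s l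
        = (1 - μ) * ∑ l ∈ range (min (n s) m + 1), (l : ℝ) * x s l
          + μ * (min (n s) (m + 1) : ℕ) := fun s => by
      simpa only [mul_comm (_ : ℝ) (x s _), mul_comm (_ : ℝ) (y s _)]
        using sum_shiftMass_mul (hcc s) μ (x s) (fun l => l)
    rw [sum_congr rfl fun s _ => hmean s, sum_add_distrib, ← mul_sum, ← mul_sum, hxmean,
      ← Nat.cast_sum, Nat.cast_succ]
    linear_combination hμC
  · refine sum_le_sum fun s _ => ?_
    rw [sum_shiftMass_mul (hcc s)]
    have hlast : f s (min (n s) (m + 1)) ≤ ∑ l ∈ range (min (n s) m + 1), x s l * f s l :=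
      le_sum_mul_of_forall_le (fun l hl => (hx01 s l hl).1) (hx1 s) fun l hl => by
        have := mem_range.1 hl
        exact hf s (Set.mem_Iic.2 (by omega)) (Set.mem_Iic.2 (min_le_left _ _)) (by omega)
    linarith [mul_le_mul_of_nonneg_left hlast hμ0]

theorem nonempty_setOf_isFeasible {m : ℕ} (hm : m ≤ ∑ s, n s) :
    {x | IsFeasible n m x}.Nonempty := by
  induction m with
  | zero => exact ⟨_, isFeasible_zero⟩
  | succ m ih =>
    obtain ⟨x, hx⟩ := ih (by omega)
    obtain ⟨y, hy, -⟩ := hx.exists_succ hm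
    exact ⟨y, hy⟩

theorem bddBelow_lpObjective_image {m : ℕ} {f : ι → ℕ → ℝ}
    (hf : ∀ s, AntitoneOn (f s) (Set.Iic (n s))) :
    BddBelow (lpObjective n m f '' {x | IsFeasible n m x}) :=
  ⟨∑ s, f s (n s), by rintro _ ⟨x, hx, rfl⟩; exact hx.sum_apply_le_lpObjective hf⟩

theorem lpValue_succ_le {m : ℕ} (hm : m + 1 ≤ ∑ s, n s) {f : ι → ℕ → ℝ}
    (hf : ∀ s, AntitoneOn (f s) (Set.Iic (n s))) : lpValue n (m + 1) f ≤ lpValue n m f := by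
  refine csInf_le_csInf_of_forall_exists_le_s12 (bddBelow_lpObjective_image hf)
    ((nonempty_setOf_isFeasible (by omega)).image _) ?_
  rintro _ ⟨x, hx, rfl⟩
  obtain ⟨y, hy, hyx⟩ := hx.exists_succ hm
  exact ⟨_, ⟨y, hy, rfl⟩, hyx f hf⟩

theorem lpValue_mono {m : ℕ} (hm : m ≤ ∑ s, n s) {f g : ι → ℕ → ℝ}
    (hf : ∀ s, AntitoneOn (f s) (Set.Iic (n s))) (hfg : ∀ s, ∀ l ≤ n s, f s l ≤ g s l) :
    lpValue n m f ≤ lpValue n m g := by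
  refine csInf_le_csInf_of_forall_exists_le_s12 (bddBelow_lpObjective_image hf)
    ((nonempty_setOf_isFeasible hm).image _) ?_
  rintro _ ⟨x, hx, rfl⟩
  refine ⟨_, ⟨x, hx, rfl⟩, sum_le_sum fun s _ => sum_le_sum fun l hl => ?_⟩
  have := mem_range.1 hl
  exact mul_le_mul_of_nonneg_left (hfg s l (by omega)) (hx.1 s l hl).1

end LP

theorem stmt12_general (S : ℕ) (n : Fin S → ℕ)
    (t t' : Fin S → ℕ → ℝ)
    (ht : ∀ s, ∀ l l' : ℕ, l ≤ l' → l' ≤ n s → t s l' ≤ t s l)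
    (hle : ∀ s, ∀ l ≤ n s, t s l ≤ t' s l) :
    let N := ∑ s, n s
    let T : (Fin S → ℕ → ℝ) → ℕ → ℝ := fun f k =>
      sInf {v : ℝ | ∃ x : Fin S → ℕ → ℝ,
        (∀ s, ∀ l ∈ Finset.range (min (n s) (N - k) + 1), 0 ≤ x s l ∧ x s l ≤ 1) ∧
        (∀ s, ∑ l ∈ Finset.range (min (n s) (N - k) + 1), x s l = 1) ∧
        (∑ s, ∑ l ∈ Finset.range (min (n s) (N - k) + 1), (l : ℝ) * x s l
            = (N : ℝ) - (k : ℝ)) ∧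
        v = ∑ s, ∑ l ∈ Finset.range (min (n s) (N - k) + 1), x s l * f s l}
    (∀ k : ℕ, 1 ≤ k → k ≤ N → T t (k - 1) ≤ T t k) ∧
    (∀ k ≤ N, T t k ≤ T t' k) := by
  intro N T
  have hT : ∀ f, ∀ k ≤ N, T f k = lpValue n (N - k) f := fun f k hk => by
    simp only [T, lpValue, lpObjective, IsFeasible, Nat.cast_sub hk, Set.image,
      Set.mem_ofPred_eq, and_assoc, eq_comm]
  have hanti : ∀ s, AntitoneOn (t s) (Set.Iic (n s)) := fun s l _ l' hl' hll' => ht s l l' hll' hl'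
  refine ⟨fun k hk hkN => ?_, fun k hkN => ?_⟩
  · rw [hT t _ (by omega), hT t k hkN, show N - (k - 1) = N - k + 1 by omega]
    exact lpValue_succ_le (by omega) hanti
  · rw [hT t k hkN, hT t' k hkN]
    exact lpValue_mono (by omega) hanti hle

/-- Monotonicity of the linear-programming lower bound on the minimized stratified rank
statistic: the LP optimal value `T(k)` is nondecreasing in the quantile index `k`, and
nondecreasing under pointwise increase of the (nonincreasing) stratum values `t_s`. -/
theorem stmt12 (S : ℕ) (hS : 1 ≤ S) (n : Fin S → ℕ) (hn : ∀ s, 1 ≤ n s)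
    (t t' : Fin S → ℕ → ℝ)
    (ht : ∀ s, ∀ l l' : ℕ, l ≤ l' → l' ≤ n s → t s l' ≤ t s l)
    (ht' : ∀ s, ∀ l l' : ℕ, l ≤ l' → l' ≤ n s → t' s l' ≤ t' s l)
    (hle : ∀ s, ∀ l ≤ n s, t s l ≤ t' s l) :
    let N := ∑ s, n s
    let T : (Fin S → ℕ → ℝ) → ℕ → ℝ := fun f k =>
      sInf {v : ℝ | ∃ x : Fin S → ℕ → ℝ,
        (∀ s, ∀ l ∈ Finset.range (min (n s) (N - k) + 1), 0 ≤ x s l ∧ x s l ≤ 1) ∧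
        (∀ s, ∑ l ∈ Finset.range (min (n s) (N - k) + 1), x s l = 1) ∧
        (∑ s, ∑ l ∈ Finset.range (min (n s) (N - k) + 1), (l : ℝ) * x s l
            = (N : ℝ) - (k : ℝ)) ∧
        v = ∑ s, ∑ l ∈ Finset.range (min (n s) (N - k) + 1), x s l * f s l}
    (∀ k : ℕ, 1 ≤ k → k ≤ N → T t (k - 1) ≤ T t k) ∧
    (∀ k ≤ N, T t k ≤ T t' k) :=
  stmt12_general S n t t' ht hle
end

section
/- For any integer n ≥ 1, any b = (b_0, b_1, …, b_n) ∈ ℝ^{n+1}, any a = (a_1,…,a_n) ∈ ℝ^n with a_i = b_{i−1} − b_i for all i, and any real number k ∈ [0, n]: Σ_{i=1}^{⌊k⌋} Ψ̃_i(a) + (k − ⌊k⌋)·Ψ̃_{⌊k⌋+1}(a) = max_{(x_0,…,x_n) ∈ S_{n,k}} Σ_{l=0}^n x_l (b_0 − b_l), where ⌊k⌋ is the greatest integer ≤ k and the term involving Ψ̃_{⌊k⌋+1}(a) is taken to be 0 when k is an integer (in particular when k = n). -/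
/-
With `a_i = b_{i-1} - b_i` the partial sums are `S_j = b_0 - b_j`, and `C = psiSum` is the least
concave majorant of `S` on `{0, …, n}`, with slopes `Ψ̃`. For `i < n` the line through `(i, C_i)`
of slope `Ψ̃_{i+1}` lies above `S` and touches it at some `p ≤ i` and some `q > i`. Hence for
`i ≤ k ≤ i + 1` the mean of `S` under any `x ∈ S_{n,k}` is at most the value of that line at `k`,
with equality for the distribution on `{p, q}` with mean `k`; and that value is the left-hand side.
-/

open Finset

-- The values of `x ↦ ∑ l, x l * f l` on the set `S_{n,k}`.
def objectiveValues (n : ℕ) (k : ℝ) (f : ℕ → ℝ) : Set ℝ :=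
  {v | ∃ x : ℕ → ℝ, (∀ l ≤ n, 0 ≤ x l ∧ x l ≤ 1) ∧
    (∑ l ∈ range (n + 1), x l = 1) ∧
    (∑ l ∈ range (n + 1), (l : ℝ) * x l = k) ∧
    v = ∑ l ∈ range (n + 1), x l * f l}

section Objective

variable {n : ℕ} {k : ℝ} {f : ℕ → ℝ}

lemma sum_mul_affine {x : ℕ → ℝ} (hx : ∑ l ∈ range (n + 1), x l = 1)
    (hxk : ∑ l ∈ range (n + 1), (l : ℝ) * x l = k) (α β x₀ : ℝ) :
    ∑ l ∈ range (n + 1), x l * (α + ((l : ℝ) - x₀) * β) = α + (k - x₀) * β := by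
  have h : ∀ l : ℕ, x l * (α + ((l : ℝ) - x₀) * β) = (α - x₀ * β) * x l + β * ((l : ℝ) * x l) :=
    fun l => by ring
  simp only [h, sum_add_distrib, ← mul_sum, hx, hxk]
  ring

lemma le_of_mem_objectiveValues {α β x₀ v : ℝ} (hf : ∀ l ≤ n, f l ≤ α + ((l : ℝ) - x₀) * β)
    (hv : v ∈ objectiveValues n k f) : v ≤ α + (k - x₀) * β := by
  obtain ⟨x, hx01, hx, hxk, rfl⟩ := hv
  rw [← sum_mul_affine hx hxk]
  refine sum_le_sum fun l hl => mul_le_mul_of_nonneg_left (hf l ?_) (hx01 l ?_).1 <;>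
    simpa [Nat.lt_succ_iff] using hl

lemma affine_mem_objectiveValues {α β x₀ : ℝ} {p q : ℕ} (hpq : p < q) (hqn : q ≤ n)
    (hpk : (p : ℝ) ≤ k) (hkq : k ≤ q) (hp : f p = α + ((p : ℝ) - x₀) * β)
    (hq : f q = α + ((q : ℝ) - x₀) * β) : α + (k - x₀) * β ∈ objectiveValues n k f := by
  have hd : (0 : ℝ) < (q : ℝ) - p := sub_pos.mpr (by exact_mod_cast hpq)
  obtain ⟨c₁, c₂, hc₁, hc₂, hc, hmean⟩ :
      ∃ c₁ c₂ : ℝ, 0 ≤ c₁ ∧ 0 ≤ c₂ ∧ c₁ + c₂ = 1 ∧ c₁ * p + c₂ * q = k :=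
    ⟨(q - k) / (q - p), (k - p) / (q - p), div_nonneg (by linarith) hd.le,
      div_nonneg (by linarith) hd.le, by field_simp; ring, by field_simp; ring⟩
  have hpr : p ∈ range (n + 1) := mem_range.mpr (by omega)
  have hqr : q ∈ range (n + 1) := mem_range.mpr (by omega)
  have hsum : ∀ g : ℕ → ℝ, ∑ l ∈ range (n + 1),
      ((if l = p then c₁ else 0) + (if l = q then c₂ else 0)) * g l = c₁ * g p + c₂ * g q := by
    intro g
    simp [add_mul, sum_add_distrib, ite_mul, hpr, hqr]
  refine ⟨fun l => (if l = p then c₁ else 0) + (if l = q then c₂ else 0), fun l _ => ?_,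
    by simpa [hc] using hsum 1, ?_, ?_⟩
  · dsimp only
    constructor <;> split_ifs <;> linarith
  · rw [sum_congr rfl fun l _ => mul_comm _ _, hsum, hmean]
  · rw [hsum, hp, hq]
    linear_combination (x₀ * β - α) * hc - β * hmean

end Objective

def partialSum (a : ℕ → ℝ) (j : ℕ) : ℝ := ∑ t ∈ Icc 1 j, a t

noncomputable def psiTangent (m : ℕ) (a : ℕ → ℝ) (i : ℕ) (x : ℝ) : ℝ :=
  psiSum m a i + (x - i) * psiT m a (i + 1)

section Tangent

variable {m : ℕ} {a : ℕ → ℝ}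

lemma psiSum_succ (i : ℕ) :
    psiSum m a (i + 1) = psiSum m a i + psiT m a (i + 1) := by
  simp [psiT]

lemma psiSum_eq_sum_psiT (q : ℕ) :
    psiSum m a q = ∑ t ∈ Icc 1 q, psiT m a t := by
  induction q with
  | zero => simp [psiSum]
  | succ q ih => rw [sum_Icc_succ_top (by omega), ← ih, psiSum_succ]

lemma psiT_succ_eq_sup' {i : ℕ} (hi : i < m) :
    psiT m a (i + 1) = (Ioc i m).sup' (nonempty_Ioc.mpr hi)
      fun j => (partialSum a j - psiSum m a i) / ((j : ℝ) - i) := by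
  rw [sup'_eq_csSup_image, psiT, psiSum, Nat.add_sub_cancel, add_sub_cancel_left]
  congr 1
  ext x
  simp only [Set.mem_ofPred_eq, Set.mem_image, coe_Ioc, Set.mem_Ioc, partialSum]
  constructor
  · rintro ⟨j, hij, hjm, rfl⟩
    exact ⟨j, ⟨hij, hjm⟩, rfl⟩
  · rintro ⟨j, ⟨hij, hjm⟩, rfl⟩
    exact ⟨j, hij, hjm, rfl⟩

lemma psiTangent_self (i : ℕ) : psiTangent m a i i = psiSum m a i := by
  simp [psiTangent]

lemma psiTangent_self_succ (i : ℕ) :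
    psiTangent m a i (i + 1 : ℕ) = psiSum m a (i + 1) := by
  simp [psiTangent, psiSum_succ]

lemma psiTangent_succ (i : ℕ) (x : ℝ) :
    psiTangent m a (i + 1) x =
      psiTangent m a i x + (x - (i + 1 : ℕ)) * (psiT m a (i + 2) - psiT m a (i + 1)) := by
  simp only [psiTangent, psiSum_succ]
  push_cast
  ring

lemma partialSum_le_psiTangent_of_lt {i j : ℕ} (hij : i < j) (hjm : j ≤ m) :
    partialSum a j ≤ psiTangent m a i j := by
  have hpos : (0 : ℝ) < (j : ℝ) - i := sub_pos.mpr (by exact_mod_cast hij)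
  have := (psiT_succ_eq_sup' (a := a) (hij.trans_le hjm)).symm ▸
    le_sup' (fun j : ℕ => (partialSum a j - psiSum m a i) / ((j : ℝ) - i))
      (mem_Ioc.mpr ⟨hij, hjm⟩)
  rw [div_le_iff₀ hpos] at this
  rw [psiTangent]
  linarith

lemma exists_partialSum_eq_psiTangent_of_lt {i : ℕ} (hi : i < m) :
    ∃ q, i < q ∧ q ≤ m ∧ partialSum a q = psiTangent m a i q := by
  obtain ⟨q, hq, hψ⟩ := exists_mem_eq_sup' (nonempty_Ioc.mpr hi)
    fun j : ℕ => (partialSum a j - psiSum m a i) / ((j : ℝ) - i)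
  obtain ⟨hiq, hqm⟩ := mem_Ioc.mp hq
  have hpos : (0 : ℝ) < (q : ℝ) - i := sub_pos.mpr (by exact_mod_cast hiq)
  refine ⟨q, hiq, hqm, ?_⟩
  rw [psiTangent, psiT_succ_eq_sup' hi, hψ]
  field_simp
  ring

lemma psiT_succ_succ_le {i : ℕ} (hi : i + 1 < m) : psiT m a (i + 2) ≤ psiT m a (i + 1) := by
  obtain ⟨q, hiq, hqm, hq⟩ := exists_partialSum_eq_psiTangent_of_lt (a := a) hi
  have hle := partialSum_le_psiTangent_of_lt (a := a) (by omega : i < q) hqm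
  rw [hq, psiTangent_succ] at hle
  have hpos : (0 : ℝ) < (q : ℝ) - (i + 1 : ℕ) := sub_pos.mpr (by exact_mod_cast hiq)
  nlinarith

lemma psiTangent_le_psiTangent_succ {i : ℕ} (hi : i + 1 < m) {x : ℝ} (hx : x ≤ (i + 1 : ℕ)) :
    psiTangent m a i x ≤ psiTangent m a (i + 1) x := by
  rw [psiTangent_succ]
  have := psiT_succ_succ_le (a := a) hi
  nlinarith

lemma partialSum_le_psiTangent_of_le {i l : ℕ} (hi : i < m) (hli : l ≤ i) :
    partialSum a l ≤ psiTangent m a i l := by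
  induction i with
  | zero => simp [Nat.le_zero.mp hli, partialSum, psiTangent, psiSum]
  | succ i ih =>
    rcases hli.lt_or_eq with hli | rfl
    · exact (ih (by omega) (by omega)).trans
        (psiTangent_le_psiTangent_succ hi (by exact_mod_cast hli.le))
    · calc partialSum a (i + 1) ≤ psiTangent m a i (i + 1 : ℕ) :=
            partialSum_le_psiTangent_of_lt (Nat.lt_succ_self i) hi.le
        _ = psiTangent m a (i + 1) (i + 1 : ℕ) := by
            rw [psiTangent_self_succ, psiTangent_self]

lemma partialSum_le_psiTangent {i l : ℕ} (hi : i < m) (hl : l ≤ m) :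
    partialSum a l ≤ psiTangent m a i l := by
  rcases le_or_gt l i with hli | hil
  · exact partialSum_le_psiTangent_of_le hi hli
  · exact partialSum_le_psiTangent_of_lt hil hl

lemma exists_le_partialSum_eq_psiTangent {i : ℕ} (hi : i < m) :
    ∃ p ≤ i, partialSum a p = psiTangent m a i p := by
  induction i with
  | zero => exact ⟨0, le_rfl, by simp [partialSum, psiTangent, psiSum]⟩
  | succ i ih =>
    obtain ⟨q, hiq, hqm, hq⟩ :=
      exists_partialSum_eq_psiTangent_of_lt (a := a) ((Nat.lt_succ_self i).trans hi)
    -- If the tangent at `i` touches beyond `i + 1`, the slope does not change at `i + 1`.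
    rcases (Nat.succ_le_of_lt hiq).lt_or_eq with hq2 | rfl
    · have hlt := psiT_succ_succ_le (a := a) hi
      have hge := partialSum_le_psiTangent_of_lt (a := a) hq2 hqm
      rw [hq, psiTangent_succ] at hge
      have hpos : (0 : ℝ) < (q : ℝ) - (i + 1 : ℕ) := sub_pos.mpr (by exact_mod_cast hq2)
      have hψ : psiT m a (i + 2) = psiT m a (i + 1) := le_antisymm hlt (by nlinarith)
      obtain ⟨p, hpi, hp⟩ := ih (by omega)
      exact ⟨p, hpi.trans (Nat.le_succ i),
        by rw [hp, psiTangent_succ, hψ, sub_self, mul_zero, add_zero]⟩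
    · exact ⟨i + 1, le_rfl, by rw [hq, psiTangent_self_succ, psiTangent_self]⟩

lemma sSup_objectiveValues_partialSum {k : ℝ} {i : ℕ} (hi : i < m)
    (hik : (i : ℝ) ≤ k) (hki : k ≤ i + 1) :
    sSup (objectiveValues m k (partialSum a)) = psiTangent m a i k := by
  obtain ⟨p, hpi, hp⟩ := exists_le_partialSum_eq_psiTangent (a := a) hi
  obtain ⟨q, hiq, hqm, hq⟩ := exists_partialSum_eq_psiTangent_of_lt (a := a) hi
  have hpk : (p : ℝ) ≤ k := le_trans (by exact_mod_cast hpi) hik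
  have hkq : k ≤ q := hki.trans (by exact_mod_cast hiq)
  exact IsGreatest.csSup_eq ⟨affine_mem_objectiveValues (by omega) hqm hpk hkq hp hq,
    fun v hv => le_of_mem_objectiveValues (fun l hl => partialSum_le_psiTangent hi hl) hv⟩

end Tangent

lemma partialSum_telescope (b : ℕ → ℝ) (j : ℕ) :
    partialSum (fun i => b (i - 1) - b i) j = b 0 - b j := by
  induction j with
  | zero => simp [partialSum]
  | succ j ih =>
    rw [partialSum, sum_Icc_succ_top (by omega), ← partialSum, ih, Nat.add_sub_cancel]
    ring

/-- The linearly interpolated partial sums of `Ψ̃(a)`, with `a_i = b_{i−1} − b_i`, equal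
the maximal fractional single-stratum objective over the simplex-with-mean constraint
`S_{n,k}`. -/
theorem stmt13 (n : ℕ) (hn : 1 ≤ n) (b : ℕ → ℝ) (k : ℝ) (hk0 : 0 ≤ k) (hkn : k ≤ n) :
    (∑ i ∈ Finset.Icc 1 ⌊k⌋₊, psiT n (fun i => b (i - 1) - b i) i) +
      (k - (⌊k⌋₊ : ℝ)) * psiT n (fun i => b (i - 1) - b i) (⌊k⌋₊ + 1) =
    sSup {v : ℝ | ∃ x : ℕ → ℝ, (∀ l ≤ n, 0 ≤ x l ∧ x l ≤ 1) ∧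
      (∑ l ∈ Finset.range (n + 1), x l = 1) ∧
      (∑ l ∈ Finset.range (n + 1), (l : ℝ) * x l = k) ∧
      v = ∑ l ∈ Finset.range (n + 1), x l * (b 0 - b l)} := by
  set a : ℕ → ℝ := fun i => b (i - 1) - b i
  have hS : (fun l => b 0 - b l) = partialSum a :=
    funext fun l => (partialSum_telescope b l).symm
  change _ = sSup (objectiveValues n k fun l => b 0 - b l)
  rw [hS, ← psiSum_eq_sum_psiT]
  rcases (Nat.floor_le_of_le hkn).lt_or_eq with hlt | heq
  · rw [sSup_objectiveValues_partialSum hlt (Nat.floor_le hk0) (Nat.lt_floor_add_one k).le]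
    rfl
  · have hk : k = n := le_antisymm hkn (heq ▸ Nat.floor_le hk0)
    -- At `k = n` use the tangent at `n - 1`, whose value at `n` is `C_n`.
    obtain ⟨j, rfl⟩ : ∃ j, n = j + 1 := ⟨n - 1, by omega⟩
    rw [sSup_objectiveValues_partialSum (i := j) (Nat.lt_succ_self j) (by simp [hk])
      (by simp [hk]), heq, hk, psiTangent, psiSum_succ]
    push_cast
    ring
end

section
/- Let n = (n_1,…,n_S) with integers n_s ≥ 1, let k be an integer with 0 ≤ k ≤ Σ_s n_s, and let b_{sj} be arbitrary real numbers for 1 ≤ s ≤ S and 0 ≤ j ≤ n_s. Let g_s : [0, n_s] → ℝ be the piecewise-linear interpolant of the points (j, b_{sj}), j = 0,1,…,n_s (so g_s(x) = b_{sj} + (b_{s,j+1} − b_{sj})(x − j) for j ≤ x ≤ j+1), and g(l_1,…,l_S) = Σ_{s=1}^S g_s(l_s). Then min_{(l_1,…,l_S) ∈ K_n(k)} g(l_1,…,l_S) = min_{(l_1,…,l_S) ∈ R_n(k)} g(l_1,…,l_S), and likewise max_{(l_1,…,l_S) ∈ K_n(k)} g = max_{(l_1,…,l_S) ∈ R_n(k)}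 g; the optima over R_n(k) exist since g is continuous and R_n(k) is compact and nonempty. -/
/-!
On every unit cell `∏ [j_s, j_s + 1]` the objective is affine. If two coordinates `s ≠ t` are
fractional, shifting mass between them within their cells, towards the coordinate with the smaller
slope, keeps the allocation feasible, does not increase the objective, and makes `s` or `t`
integral. Because the total `k` is an integer, fractional coordinates never occur alone, so this
rounding ends at an integral allocation. Hence every real allocation is dominated by an integral
one (for the maximum, apply this to `-b`), and the infima and suprema agree.
-/

open Finset

/-- Piecewise-linear interpolant of the points `(j, b j)`, `j = 0, 1, 2, …`
(on `[0, m]` it interpolates `(j, b j)` for `j = 0, …, m`). -/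
noncomputable def plin (b : ℕ → ℝ) (x : ℝ) : ℝ :=
  b ⌊x⌋₊ + (b (⌊x⌋₊ + 1) - b ⌊x⌋₊) * (x - (⌊x⌋₊ : ℝ))

lemma plin_natCast (b : ℕ → ℝ) (m : ℕ) : plin b m = b m := by
  simp [plin]

lemma plin_neg (b : ℕ → ℝ) (x : ℝ) : plin (fun j => -b j) x = -plin b x := by
  simp only [plin]
  ring

lemma plin_eq_of_mem_Icc (b : ℕ → ℝ) {j : ℕ} {x : ℝ} (hx : x ∈ Set.Icc (j : ℝ) (j + 1)) :
    plin b x = b j + (b (j + 1) - b j) * (x - j) := by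
  rcases hx.2.eq_or_lt with rfl | hlt
  · rw [← Nat.cast_succ, plin_natCast]
    push_cast
    ring
  · have hfloor : ⌊x⌋₊ = j := (Nat.floor_eq_iff ((Nat.cast_nonneg j).trans hx.1)).2 ⟨hx.1, hlt⟩
    simp [plin, hfloor]

lemma plin_sub_plin_of_mem_Icc (b : ℕ → ℝ) {j : ℕ} {x y : ℝ}
    (hx : x ∈ Set.Icc (j : ℝ) (j + 1)) (hy : y ∈ Set.Icc (j : ℝ) (j + 1)) :
    plin b y - plin b x = (b (j + 1) - b j) * (y - x) := by
  rw [plin_eq_of_mem_Icc b hx, plin_eq_of_mem_Icc b hy]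
  ring

lemma Nat.floor_lt_of_notMem_range {R : Type*} [Semiring R] [LinearOrder R] [FloorSemiring R]
    [IsStrictOrderedRing R] {x : R} (hx : 0 ≤ x) (h : x ∉ Set.range ((↑) : ℕ → R)) :
    (⌊x⌋₊ : R) < x :=
  (Nat.floor_le hx).lt_of_ne fun heq => h ⟨_, heq⟩

variable {ι : Type*}

def nonNatCoords (l : ι → ℝ) : Set ι := {u | l u ∉ Set.range ((↑) : ℕ → ℝ)}

lemma nonNatCoords_update_update_ssubset [DecidableEq ι] {l : ι → ℝ} {s t : ι} (hst : s ≠ t)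
    {x y : ℝ} (hs : s ∈ nonNatCoords l) (ht : t ∈ nonNatCoords l)
    (hxy : x ∈ Set.range ((↑) : ℕ → ℝ) ∨ y ∈ Set.range ((↑) : ℕ → ℝ)) :
    nonNatCoords (Function.update (Function.update l s x) t y) ⊂ nonNatCoords l := by
  set l' := Function.update (Function.update l s x) t y
  have hsub : nonNatCoords l' ⊆ nonNatCoords l := fun u hu => by
    by_cases hus : u = s
    · exact hus ▸ hs
    by_cases hut : u = t
    · exact hut ▸ ht
    · simpa [nonNatCoords, l', hus, hut] using hu
  refine (Set.ssubset_iff_of_subset hsub).2 ?_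
  rcases hxy with hx | hy
  · exact ⟨s, hs, fun h => h (by simpa [l', hst] using hx)⟩
  · exact ⟨t, ht, fun h => h (by simpa [l'] using hy)⟩

variable [Fintype ι]

lemma sum_update_update {α M : Type*} [AddCommGroup M] [DecidableEq ι] (f : ι → α → M)
    (l : ι → α) {s t : ι} (hst : s ≠ t) (x y : α) :
    ∑ u, f u (Function.update (Function.update l s x) t y u) =
      ∑ u, f u (l u) + (f s x - f s (l s)) + (f t y - f t (l t)) := by
  have hdiff : ∑ u, (f u (Function.update (Function.update l s x) t y u) - f u (l u)) =
      (f s x - f s (l s)) + (f t y - f t (l t)) := by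
    rw [Fintype.sum_eq_add s t hst fun u ⟨hus, hut⟩ => by simp [hus, hut]]
    simp [hst]
  rw [add_assoc, ← hdiff, sum_sub_distrib]
  abel

lemma exists_ne_mem_nonNatCoords {k : ℕ} {l : ι → ℝ} (h0 : ∀ u, 0 ≤ l u)
    (hsum : ∑ u, l u = k) {s : ι} (hs : s ∈ nonNatCoords l) :
    ∃ t ∈ nonNatCoords l, t ≠ s := by
  classical
  by_contra! hother
  have hnat : ∀ u ∈ univ.erase s, l u = ⌊l u⌋₊ := fun u hu => by
    by_contra hne
    refine (mem_erase.1 hu).1 (hother u ?_)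
    rintro ⟨m, hm⟩
    simp [← hm] at hne
  set N := ∑ u ∈ univ.erase s, ⌊l u⌋₊
  have hls : l s + N = k := by
    rw [← hsum, ← add_sum_erase univ l (mem_univ s), sum_congr rfl hnat]
    push_cast [N]
    rfl
  have hNk : N ≤ k := by exact_mod_cast (show (N : ℝ) ≤ k by linarith [h0 s])
  exact hs ⟨k - N, by push_cast [hNk]; linarith⟩

lemma exists_exchange_sum_plin_le [DecidableEq ι] (n : ι → ℕ) (b : ι → ℕ → ℝ) {l : ι → ℝ}
    (hl : ∀ u, 0 ≤ l u ∧ l u ≤ n u) {s t : ι} (hst : s ≠ t)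
    (hs : s ∈ nonNatCoords l) (ht : t ∈ nonNatCoords l)
    (hslope : b s (⌊l s⌋₊ + 1) - b s ⌊l s⌋₊ ≤ b t (⌊l t⌋₊ + 1) - b t ⌊l t⌋₊) :
    ∃ l' : ι → ℝ, (∀ u, 0 ≤ l' u ∧ l' u ≤ n u) ∧ ∑ u, l' u = ∑ u, l u ∧
      ∑ u, plin (b u) (l' u) ≤ ∑ u, plin (b u) (l u) ∧ nonNatCoords l' ⊂ nonNatCoords l := by
  set js := ⌊l s⌋₊
  set jt := ⌊l t⌋₊
  have hjs : (js : ℝ) < l s := Nat.floor_lt_of_notMem_range (hl s).1 hs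
  have hjt : (jt : ℝ) < l t := Nat.floor_lt_of_notMem_range (hl t).1 ht
  have hjs1 : l s < js + 1 := Nat.lt_floor_add_one (l s)
  have hjt1 : l t < jt + 1 := Nat.lt_floor_add_one (l t)
  have hjsn : (js : ℝ) + 1 ≤ n s := by
    exact_mod_cast Nat.succ_le_of_lt (by exact_mod_cast hjs.trans_le (hl s).2 : js < n s)
  -- the largest shift from `t` to `s` keeping both coordinates in their unit cells
  set ε := min (js + 1 - l s) (l t - jt)
  have hε : 0 < ε := lt_min (by linarith) (by linarith)
  have hεs : ε ≤ js + 1 - l s := min_le_left _ _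
  have hεt : ε ≤ l t - jt := min_le_right _ _
  refine ⟨Function.update (Function.update l s (l s + ε)) t (l t - ε), fun u => ?_, ?_, ?_,
    nonNatCoords_update_update_ssubset hst hs ht ?_⟩
  · by_cases hut : u = t
    · subst hut
      simp only [Function.update_self]
      constructor <;> linarith [(hl u).2, (Nat.cast_nonneg jt : (0 : ℝ) ≤ jt)]
    by_cases hus : u = s
    · subst hus
      simp only [Function.update_of_ne hut, Function.update_self]
      constructor <;> linarith [(hl u).1]
    · simpa [hus, hut] using hl u
  · rw [sum_update_update (fun _ x => x) l hst]
    ring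
  · rw [sum_update_update (fun u => plin (b u)) l hst,
      plin_sub_plin_of_mem_Icc (b s) (j := js) ⟨hjs.le, hjs1.le⟩ ⟨by linarith, by linarith⟩,
      plin_sub_plin_of_mem_Icc (b t) (j := jt) ⟨hjt.le, hjt1.le⟩ ⟨by linarith, by linarith⟩]
    linarith [mul_le_mul_of_nonneg_right hslope hε.le]
  · rcases min_choice (js + 1 - l s) (l t - jt) with hεeq | hεeq
    · exact .inl ⟨js + 1, by rw [show ε = js + 1 - l s from hεeq]; push_cast; ring⟩
    · exact .inr ⟨jt, by rw [show ε = l t - jt from hεeq]; ring⟩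

theorem exists_nat_sum_plin_le (n : ι → ℕ) (b : ι → ℕ → ℝ) {k : ℕ} {l : ι → ℝ}
    (hl : ∀ u, 0 ≤ l u ∧ l u ≤ n u) (hsum : ∑ u, l u = k) :
    ∃ m : ι → ℕ, (∀ u, m u ≤ n u) ∧ ∑ u, m u = k ∧
      ∑ u, plin (b u) (m u) ≤ ∑ u, plin (b u) (l u) := by
  classical
  induction hN : (nonNatCoords l).ncard using Nat.strong_induction_on generalizing l with
  | _ N ih =>
    rcases (nonNatCoords l).eq_empty_or_nonempty with hempty | ⟨s, hs⟩
    · have hnat : ∀ u, ∃ m : ℕ, (m : ℝ) = l u := by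
        simpa [nonNatCoords, Set.eq_empty_iff_forall_notMem] using hempty
      choose m hm using hnat
      refine ⟨m, fun u => ?_, ?_, by simp [hm]⟩
      · exact_mod_cast (hm u).trans_le (hl u).2
      · exact_mod_cast (by push_cast; simp [hm, hsum] : ((∑ u, m u : ℕ) : ℝ) = k)
    obtain ⟨t, ht, hts⟩ := exists_ne_mem_nonNatCoords (fun u => (hl u).1) hsum hs
    obtain ⟨l', hl', hsum', hle, hlt⟩ : ∃ l' : ι → ℝ, (∀ u, 0 ≤ l' u ∧ l' u ≤ n u) ∧
        ∑ u, l' u = ∑ u, l u ∧ ∑ u, plin (b u) (l' u) ≤ ∑ u, plin (b u) (l u) ∧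
        nonNatCoords l' ⊂ nonNatCoords l := by
      rcases le_total (b s (⌊l s⌋₊ + 1) - b s ⌊l s⌋₊) (b t (⌊l t⌋₊ + 1) - b t ⌊l t⌋₊)
        with h | h
      · exact exists_exchange_sum_plin_le n b hl hts.symm hs ht h
      · exact exists_exchange_sum_plin_le n b hl hts ht hs h
    obtain ⟨m, hm, hmsum, hmle⟩ :=
      ih _ (hN ▸ Set.ncard_lt_ncard hlt) hl' (hsum'.trans hsum) rfl
    exact ⟨m, hm, hmsum, hmle.trans hle⟩

theorem exists_nat_le_sum_plin (n : ι → ℕ) (b : ι → ℕ → ℝ) {k : ℕ} {l : ι → ℝ}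
    (hl : ∀ u, 0 ≤ l u ∧ l u ≤ n u) (hsum : ∑ u, l u = k) :
    ∃ m : ι → ℕ, (∀ u, m u ≤ n u) ∧ ∑ u, m u = k ∧
      ∑ u, plin (b u) (l u) ≤ ∑ u, plin (b u) (m u) := by
  obtain ⟨m, hm, hmsum, hle⟩ := exists_nat_sum_plin_le n (fun u j => -b u j) hl hsum
  simp only [plin_neg, sum_neg_distrib, neg_le_neg_iff] at hle
  exact ⟨m, hm, hmsum, hle⟩

theorem stmt14_general (S : ℕ) (n : Fin S → ℕ)
    (k : ℕ) (b : Fin S → ℕ → ℝ) :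
    (sInf {v : ℝ | ∃ l : Fin S → ℕ, (∀ s, l s ≤ n s) ∧ (∑ s, l s = k) ∧
        v = ∑ s, plin (b s) (l s : ℝ)} =
      sInf {v : ℝ | ∃ l : Fin S → ℝ, (∀ s, 0 ≤ l s ∧ l s ≤ (n s : ℝ)) ∧
        (∑ s, l s = (k : ℝ)) ∧ v = ∑ s, plin (b s) (l s)}) ∧
    (sSup {v : ℝ | ∃ l : Fin S → ℕ, (∀ s, l s ≤ n s) ∧ (∑ s, l s = k) ∧
        v = ∑ s, plin (b s) (l s : ℝ)} =
      sSup {v : ℝ | ∃ l : Fin S → ℝ, (∀ s, 0 ≤ l s ∧ l s ≤ (n s : ℝ)) ∧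
        (∑ s, l s = (k : ℝ)) ∧ v = ∑ s, plin (b s) (l s)}) := by
  have hreal : ∀ m : Fin S → ℕ, (∀ s, m s ≤ n s) → ∑ s, m s = k →
      (∀ s, 0 ≤ (m s : ℝ) ∧ (m s : ℝ) ≤ n s) ∧ ∑ s, (m s : ℝ) = k := fun m hm hsum =>
    ⟨fun s => ⟨Nat.cast_nonneg _, Nat.cast_le.2 (hm s)⟩, by exact_mod_cast hsum⟩
  constructor
  · refine csInf_eq_csInf_of_forall_exists_le ?_ ?_
    · rintro _ ⟨m, hm, hsum, rfl⟩
      exact ⟨_, ⟨_, (hreal m hm hsum).1, (hreal m hm hsum).2, rfl⟩, le_rfl⟩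
    · rintro _ ⟨l, hl, hsum, rfl⟩
      obtain ⟨m, hm, hmsum, hle⟩ := exists_nat_sum_plin_le n b hl hsum
      exact ⟨_, ⟨m, hm, hmsum, rfl⟩, hle⟩
  · refine csSup_eq_csSup_of_forall_exists_le ?_ ?_
    · rintro _ ⟨m, hm, hsum, rfl⟩
      exact ⟨_, ⟨_, (hreal m hm hsum).1, (hreal m hm hsum).2, rfl⟩, le_rfl⟩
    · rintro _ ⟨l, hl, hsum, rfl⟩
      obtain ⟨m, hm, hmsum, hle⟩ := exists_nat_le_sum_plin n b hl hsum
      exact ⟨_, ⟨m, hm, hmsum, rfl⟩, hle⟩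

/-- For a separable sum of piecewise-linear interpolants, dropping the integer
constraints changes neither the minimum nor the maximum over the allocation polytope. -/
theorem stmt14 (S : ℕ) (hS : 1 ≤ S) (n : Fin S → ℕ) (hn : ∀ s, 1 ≤ n s)
    (k : ℕ) (hk : k ≤ ∑ s, n s) (b : Fin S → ℕ → ℝ) :
    (sInf {v : ℝ | ∃ l : Fin S → ℕ, (∀ s, l s ≤ n s) ∧ (∑ s, l s = k) ∧
        v = ∑ s, plin (b s) (l s : ℝ)} =
      sInf {v : ℝ | ∃ l : Fin S → ℝ, (∀ s, 0 ≤ l s ∧ l s ≤ (n s : ℝ)) ∧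
        (∑ s, l s = (k : ℝ)) ∧ v = ∑ s, plin (b s) (l s)}) ∧
    (sSup {v : ℝ | ∃ l : Fin S → ℕ, (∀ s, l s ≤ n s) ∧ (∑ s, l s = k) ∧
        v = ∑ s, plin (b s) (l s : ℝ)} =
      sSup {v : ℝ | ∃ l : Fin S → ℝ, (∀ s, 0 ≤ l s ∧ l s ≤ (n s : ℝ)) ∧
        (∑ s, l s = (k : ℝ)) ∧ v = ∑ s, plin (b s) (l s)}) :=
  stmt14_general S n k b
end

section
/- Let m ≥ 1 be an integer and let r_1(0) < r_2(0) < … < r_m(0) be strictly increasing positive integers. For l ≥ 1 define recursively r_1(l) = 1 and r_i(l) = r_{i−1}(l−1) + 1 for 2 ≤ i ≤ m. Let φ : [1, ∞) → ℝ be nondecreasing and concave, and define Δ(l) = Σ_{i=1}^m ( φ(r_i(l−1)) − φ(r_i(l)) ) for l ≥ 1. Then Δ(l) ≥ Δ(l+1) for every l ≥ 1. -/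
/-!
Write `r_i(l)` for the configuration after `l` updates. Since `r_1(l+1) = 1` and the other
entries are shifted up by one, `Σ_i φ(r_i(l+1)) = φ(1) + Σ_{i<m} φ(r_i(l) + 1)`, so that
`Δ(l+1) = φ(r_m(l)) - φ(1) + Σ_{i<m} (φ(r_i(l)) - φ(r_i(l) + 1))`.
The update is monotone, and `r(1) ≤ r(0)` entrywise because `r(0)` is positive and strictly
increasing, hence every `r_i(l)` decreases in `l`. As `φ` is nondecreasing the first term
decreases, and as `φ` is concave the increments `φ(a + 1) - φ(a)` grow when `a` decreases, so
every summand of the last sum decreases as well.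
-/

/-- The recursively updated rank configuration: `r i 0 = r0 i`, and for `l ≥ 1`,
`r 1 l = 1` and `r i l = r (i−1) (l−1) + 1` for `i ≥ 2`. -/
def rseq (r0 : ℕ → ℕ) : ℕ → ℕ → ℕ
  | i, 0 => r0 i
  | i, l + 1 => if i ≤ 1 then 1 else rseq r0 (i - 1) l + 1

lemma ConcaveOn.add_sub_le_add_sub_of_le {𝕜 : Type*} [Field 𝕜] [LinearOrder 𝕜]
    [IsStrictOrderedRing 𝕜] {s : Set 𝕜} {f : 𝕜 → 𝕜} (hf : ConcaveOn 𝕜 s f) {x y d : 𝕜}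
    (hx : x ∈ s) (hyd : y + d ∈ s) (hxy : x ≤ y) (hd : 0 < d) :
    f (y + d) - f y ≤ f (x + d) - f x := by
  have hs := hf.1.ordConnected
  have hy : y ∈ s := hs.out hx hyd ⟨hxy, by linarith⟩
  have hxd : x + d ∈ s := hs.out hx hyd ⟨by linarith, by linarith⟩
  have hslope : slope f y (y + d) ≤ slope f x (x + d) := by
    rcases hxy.eq_or_lt with rfl | hxy
    · exact le_rfl
    calc slope f y (y + d)
        = slope f (y + d) y := slope_comm f _ _
      _ ≤ slope f (y + d) x :=
          hf.slope_anti hyd ⟨hx, (by linarith : x < y + d).ne⟩ ⟨hy, (by linarith : y < y + d).ne⟩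
            hxy.le
      _ = slope f x (y + d) := slope_comm f _ _
      _ ≤ slope f x (x + d) :=
          hf.slope_anti hx ⟨hxd, (by linarith : x < x + d).ne'⟩ ⟨hyd, (by linarith : x < y + d).ne'⟩
            (by linarith)
  simpa [slope_def_field, div_le_div_iff_of_pos_right hd] using hslope

lemma rseq_succ (r0 : ℕ → ℕ) (i l : ℕ) :
    rseq r0 i (l + 1) = if i ≤ 1 then 1 else rseq r0 (i - 1) l + 1 := rfl

lemma one_le_rseq_succ (r0 : ℕ → ℕ) (i l : ℕ) : 1 ≤ rseq r0 i (l + 1) := by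
  rw [rseq_succ]
  split <;> omega

lemma rseq_succ_le {m : ℕ} {r0 : ℕ → ℕ}
    (hpos : ∀ i : ℕ, 1 ≤ i → i ≤ m → 1 ≤ r0 i)
    (hinc : ∀ i j : ℕ, 1 ≤ i → i < j → j ≤ m → r0 i < r0 j) (l : ℕ) :
    ∀ i : ℕ, 1 ≤ i → i ≤ m → rseq r0 i (l + 1) ≤ rseq r0 i l := by
  induction l with
  | zero =>
    intro i hi him
    rw [rseq_succ]
    split
    · exact hpos i hi him
    · exact hinc (i - 1) i (by omega) (by omega) him
  | succ l ih =>
    intro i hi him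
    rw [rseq_succ, rseq_succ r0 i l]
    split
    · exact le_rfl
    · exact Nat.succ_le_succ (ih (i - 1) (by omega) (by omega))

lemma sum_rseq_succ {M : Type*} [AddCommMonoid M] (g : ℕ → M) (r0 : ℕ → ℕ) (l n : ℕ) :
    ∑ i ∈ Finset.Icc 1 (n + 1), g (rseq r0 i (l + 1)) =
      g 1 + ∑ i ∈ Finset.Icc 1 n, g (rseq r0 i l + 1) := by
  induction n with
  | zero => simp [rseq_succ]
  | succ n ih =>
    rw [Finset.sum_Icc_succ_top (by omega), ih, Finset.sum_Icc_succ_top (by omega), add_assoc,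
      rseq_succ, if_neg (by omega), Nat.add_sub_cancel]

lemma sum_sub_rseq_succ {M : Type*} [AddCommGroup M] (g : ℕ → M) (r0 : ℕ → ℕ) (l n : ℕ) :
    ∑ i ∈ Finset.Icc 1 (n + 1), (g (rseq r0 i l) - g (rseq r0 i (l + 1))) =
      g (rseq r0 (n + 1) l) - g 1 +
        ∑ i ∈ Finset.Icc 1 n, (g (rseq r0 i l) - g (rseq r0 i l + 1)) := by
  rw [Finset.sum_sub_distrib, Finset.sum_sub_distrib, sum_rseq_succ,
    Finset.sum_Icc_succ_top (by omega)]
  abel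

theorem stmt15_general (m : ℕ) (r0 : ℕ → ℕ)
    (hpos : ∀ i : ℕ, 1 ≤ i → i ≤ m → 1 ≤ r0 i)
    (hinc : ∀ i j : ℕ, 1 ≤ i → i < j → j ≤ m → r0 i < r0 j)
    (φ : ℝ → ℝ) (hmono : MonotoneOn φ (Set.Ici (1 : ℝ)))
    (hconc : ConcaveOn ℝ (Set.Ici (1 : ℝ)) φ) :
    ∀ l : ℕ, 1 ≤ l →
      (∑ i ∈ Finset.Icc 1 m,
          (φ ((rseq r0 i l : ℕ) : ℝ) - φ ((rseq r0 i (l + 1) : ℕ) : ℝ))) ≤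
      ∑ i ∈ Finset.Icc 1 m,
          (φ ((rseq r0 i (l - 1) : ℕ) : ℝ) - φ ((rseq r0 i l : ℕ) : ℝ)) := by
  intro l hl
  obtain ⟨k, rfl⟩ : ∃ k, l = k + 1 := ⟨l - 1, by omega⟩
  rcases m with _ | n
  · simp
  have hdec := rseq_succ_le hpos hinc k
  have mem_Ici : ∀ a : ℕ, 1 ≤ a → (a : ℝ) ∈ Set.Ici 1 := fun a ha => by simpa using ha
  rw [sum_sub_rseq_succ (fun a : ℕ => φ a), Nat.add_sub_cancel,
    sum_sub_rseq_succ (fun a : ℕ => φ a)]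
  have hlast : φ (rseq r0 (n + 1) (k + 1)) ≤ φ (rseq r0 (n + 1) k) :=
    hmono (mem_Ici _ (one_le_rseq_succ r0 (n + 1) k))
      (mem_Ici _ ((one_le_rseq_succ r0 (n + 1) k).trans (hdec (n + 1) (by omega) le_rfl)))
      (by exact_mod_cast hdec (n + 1) (by omega) le_rfl)
  refine add_le_add (sub_le_sub_right hlast _) (Finset.sum_le_sum fun i hi => ?_)
  rw [Finset.mem_Icc] at hi
  have hincr := hconc.add_sub_le_add_sub_of_le (y := rseq r0 i k) (d := 1)
    (mem_Ici _ (one_le_rseq_succ r0 i k)) (by simp)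
    (by exact_mod_cast hdec i hi.1 (by omega)) one_pos
  push_cast
  linarith

/-- For a nondecreasing concave rank transformation `φ`, the successive decrements
`Δ(l) = Σ_{i=1}^m (φ(r_i(l−1)) − φ(r_i(l)))` form a nonincreasing sequence in `l`. -/
theorem stmt15 (m : ℕ) (hm : 1 ≤ m) (r0 : ℕ → ℕ)
    (hpos : ∀ i : ℕ, 1 ≤ i → i ≤ m → 1 ≤ r0 i)
    (hinc : ∀ i j : ℕ, 1 ≤ i → i < j → j ≤ m → r0 i < r0 j)
    (φ : ℝ → ℝ) (hmono : MonotoneOn φ (Set.Ici (1 : ℝ)))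
    (hconc : ConcaveOn ℝ (Set.Ici (1 : ℝ)) φ) :
    ∀ l : ℕ, 1 ≤ l →
      (∑ i ∈ Finset.Icc 1 m,
          (φ ((rseq r0 i l : ℕ) : ℝ) - φ ((rseq r0 i (l + 1) : ℕ) : ℝ))) ≤
      ∑ i ∈ Finset.Icc 1 m,
          (φ ((rseq r0 i (l - 1) : ℕ) : ℝ) - φ ((rseq r0 i l : ℕ) : ℝ)) :=
  stmt15_general m r0 hpos hinc φ hmono hconc
end

section
/- For every integer h ≥ 2, the extended Stephenson rank transformation φ : ℝ → ℝ defined by φ(r) = (1/(h−1)!)·∏_{t=1}^{h−1} (r − t) for r ≥ h−1 and φ(r) = 0 for r < h−1 is convex on ℝ. (On positive integers r ≥ h−1 this function equals the binomial coefficient C(r−1, h−1), the Stephenson rank score.) -/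
/-!
On `[k, ∞)` with `k = h - 1`, the polynomial `∏_{t=1}^{k} (r - t)` is a product of nonnegative,
nondecreasing, convex factors `r - t`, hence itself nonnegative, nondecreasing and convex.
Since it vanishes at `r = k`, the transformation is this polynomial evaluated at `max r k`
(up to the factor `1 / k!`), and precomposing a nondecreasing convex function with the convex
map `r ↦ max r k` preserves convexity.
-/

open Set Finset

variable {𝕜 : Type*} [Field 𝕜] [LinearOrder 𝕜] [IsStrictOrderedRing 𝕜]

theorem ConvexOn.prod_of_monotoneOn {ι : Type*} {s : Set 𝕜} (hs : Convex 𝕜 s) (f : ι → 𝕜 → 𝕜)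
    (t : Finset ι) (hconv : ∀ i ∈ t, ConvexOn 𝕜 s (f i)) (hmono : ∀ i ∈ t, MonotoneOn (f i) s)
    (hnonneg : ∀ i ∈ t, ∀ x ∈ s, 0 ≤ f i x) :
    ConvexOn 𝕜 s (fun x => ∏ i ∈ t, f i x) ∧ MonotoneOn (fun x => ∏ i ∈ t, f i x) s := by
  classical
  induction t using Finset.induction_on with
  | empty => exact ⟨convexOn_const 1 hs, monotoneOn_const⟩
  | insert j t hj ih =>
    simp only [Finset.forall_mem_insert] at hconv hmono hnonneg
    obtain ⟨hconv_t, hmono_t⟩ := ih hconv.2 hmono.2 hnonneg.2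
    have hprod_nonneg : ∀ x ∈ s, 0 ≤ ∏ i ∈ t, f i x :=
      fun x hx => prod_nonneg fun i hi => hnonneg.2 i hi x hx
    simp only [prod_insert hj]
    exact ⟨hconv.1.mul hconv_t hnonneg.1 hprod_nonneg (hmono.1.monovaryOn hmono_t),
      hmono.1.mul hmono_t hnonneg.1 hprod_nonneg⟩

theorem ConvexOn.comp_max_const {g : 𝕜 → 𝕜} {a : 𝕜} (hconv : ConvexOn 𝕜 (Ici a) g)
    (hmono : MonotoneOn g (Ici a)) : ConvexOn 𝕜 univ (fun r => g (max r a)) := by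
  have himage : (fun r => max r a) '' univ = Ici a := by
    ext x
    exact ⟨by rintro ⟨y, -, rfl⟩; exact le_max_right y a,
      fun hx => ⟨x, mem_univ x, max_eq_left hx⟩⟩
  refine ConvexOn.comp (f := fun r => max r a) ?_ ((convexOn_id convex_univ).sup
    (convexOn_const a convex_univ)) ?_
  · rwa [himage]
  · rwa [himage]

theorem convexOn_prod_Icc_sub (k : ℕ) :
    ConvexOn 𝕜 (Ici (k : 𝕜)) (fun r => ∏ t ∈ Icc 1 k, (r - (t : 𝕜))) ∧
    MonotoneOn (fun r => ∏ t ∈ Icc 1 k, (r - (t : 𝕜))) (Ici (k : 𝕜)) := by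
  refine ConvexOn.prod_of_monotoneOn (convex_Ici _) (fun (t : ℕ) r => r - (t : 𝕜)) _
    (fun t _ => (convexOn_id (convex_Ici _)).sub (concaveOn_const _ (convex_Ici _)))
    (fun t _ x _ y _ hxy => sub_le_sub_right hxy _) fun t ht x hx => ?_
  have htk : (t : 𝕜) ≤ k := Nat.cast_le.2 (mem_Icc.1 ht).2
  exact sub_nonneg.2 (htk.trans hx)

theorem prod_Icc_sub_self {R : Type*} [CommRing R] {k : ℕ} (hk : 1 ≤ k) :
    ∏ t ∈ Icc 1 k, ((k : R) - (t : R)) = 0 :=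
  prod_eq_zero (mem_Icc.2 ⟨hk, le_rfl⟩) (sub_self _)

/-- The extended Stephenson rank transformation
`φ(r) = (∏_{t=1}^{h−1} (r − t)) / (h−1)!` for `r ≥ h − 1` and `φ(r) = 0` otherwise
is convex on all of `ℝ`. -/
theorem stmt16 (h : ℕ) (hh : 2 ≤ h) :
    ConvexOn ℝ Set.univ (fun r : ℝ =>
      if (h : ℝ) - 1 ≤ r then
        (∏ t ∈ Finset.Icc 1 (h - 1), (r - (t : ℝ))) / (Nat.factorial (h - 1) : ℝ)
      else 0) := by
  have hk : (((h - 1 : ℕ)) : ℝ) = h - 1 := by rw [Nat.cast_sub (by omega), Nat.cast_one]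
  obtain ⟨hconv, hmono⟩ := convexOn_prod_Icc_sub (𝕜 := ℝ) (h - 1)
  refine ((hconv.comp_max_const hmono).smul
    (inv_nonneg.2 (Nat.cast_nonneg (h - 1).factorial))).congr fun r _ => ?_
  simp only [hk, smul_eq_mul]
  split_ifs with hr
  · rw [max_eq_left hr, div_eq_inv_mul]
  · rw [max_eq_right (not_le.1 hr).le, ← hk, prod_Icc_sub_self (R := ℝ) (by omega), mul_zero]
end

section
/- Let n ≥ 1 be an integer, Γ ≥ 1 a real number, γ = log Γ, u_1,…,u_n ∈ [0,1], and define the probabilities p_i = e^{γ u_i} / Σ_{j=1}^n e^{γ u_j}. Then for any real numbers ψ_1,…,ψ_n, the variance of ψ under p satisfies Σ_{i=1}^n p_i ψ_i² − ( Σ_{i=1}^n p_i ψ_i )² ≥ 2·( max_i ψ_i − min_i ψ_i )² / ( n³ Γ³ ). -/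
/-!
Every Rosenbaum weight `Γ ^ u_i` lies in `[1, Γ]`, so each probability `p_i` is at least
`1 / (n Γ)`. Writing the variance as `∑ p_i (ψ_i - μ)²` and keeping only the two units `a`, `b`
where `ψ` is extremal gives at least `((ψ_a - μ)² + (ψ_b - μ)²) / (n Γ) ≥ R² / (2 n Γ)`, which
dominates `2 R² / (n Γ)³` as soon as `n Γ ≥ 2`; and if `n = 1` then `R = 0`.
-/

open Finset Real

section WeightedVariance

variable {ι : Type*} (s : Finset ι) (p x : ι → ℝ)

theorem sum_mul_sq_sub_sq_sum_mul_eq (hp : ∑ i ∈ s, p i = 1) :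
    ∑ i ∈ s, p i * x i ^ 2 - (∑ i ∈ s, p i * x i) ^ 2 =
      ∑ i ∈ s, p i * (x i - ∑ j ∈ s, p j * x j) ^ 2 := by
  set μ := ∑ j ∈ s, p j * x j
  have hexpand : ∀ i ∈ s, p i * (x i - μ) ^ 2 = p i * x i ^ 2 - 2 * μ * (p i * x i) + μ ^ 2 * p i :=
    fun i _ => by ring
  rw [sum_congr rfl hexpand, sum_add_distrib, sum_sub_distrib, ← mul_sum, ← mul_sum, hp]
  ring

theorem mul_half_sq_sub_le_sum_mul_sq_sub {c : ℝ} (hc : 0 ≤ c) (hp : ∀ i ∈ s, c ≤ p i)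
    {a b : ι} (ha : a ∈ s) (hb : b ∈ s) (hab : a ≠ b) (μ : ℝ) :
    c * ((x a - x b) ^ 2 / 2) ≤ ∑ i ∈ s, p i * (x i - μ) ^ 2 := by
  classical
  have hpair : (x a - x b) ^ 2 / 2 ≤ (x a - μ) ^ 2 + (x b - μ) ^ 2 := by
    nlinarith [sq_nonneg (x a + x b - 2 * μ)]
  calc c * ((x a - x b) ^ 2 / 2) ≤ c * (x a - μ) ^ 2 + c * (x b - μ) ^ 2 := by
        rw [← mul_add]; exact mul_le_mul_of_nonneg_left hpair hc
    _ ≤ p a * (x a - μ) ^ 2 + p b * (x b - μ) ^ 2 := by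
        gcongr
        exacts [hp a ha, hp b hb]
    _ = ∑ i ∈ {a, b}, p i * (x i - μ) ^ 2 := (sum_pair (f := fun i => p i * (x i - μ) ^ 2) hab).symm
    _ ≤ ∑ i ∈ s, p i * (x i - μ) ^ 2 :=
        sum_le_sum_of_subset_of_nonneg (insert_subset ha (singleton_subset_iff.2 hb))
          fun i hi _ => mul_nonneg (hc.trans (hp i hi)) (sq_nonneg _)

end WeightedVariance

theorem one_div_card_mul_le_div_sum {ι : Type*} [Fintype ι] {w : ι → ℝ} {Γ : ℝ}
    (hw : ∀ i, w i ∈ Set.Icc 1 Γ) (i : ι) :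
    1 / (Fintype.card ι * Γ) ≤ w i / ∑ j, w j := by
  have hsum_le : ∑ j, w j ≤ Fintype.card ι * Γ := by
    simpa using sum_le_sum fun j (_ : j ∈ univ) => (hw j).2
  have hsum_pos : 0 < ∑ j, w j :=
    one_pos.trans_le ((hw i).1.trans (single_le_sum (fun j _ => zero_le_one.trans (hw j).1)
      (mem_univ i)))
  exact div_le_div₀ (zero_le_one.trans (hw i).1) (hw i).1 hsum_pos hsum_le

theorem exp_log_mul_mem_Icc {Γ u : ℝ} (hΓ : 1 ≤ Γ) (hu : u ∈ Set.Icc (0 : ℝ) 1) :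
    exp (log Γ * u) ∈ Set.Icc 1 Γ := by
  rw [← rpow_def_of_pos (one_pos.trans_le hΓ)]
  exact ⟨one_le_rpow hΓ hu.1, by simpa using rpow_le_rpow_of_exponent_le hΓ hu.2⟩

theorem two_mul_div_pow_three_le {R t : ℝ} (hR : 0 ≤ R) (ht : 2 ≤ t) :
    2 * R / t ^ 3 ≤ 1 / t * (R / 2) := by
  have ht0 : 0 < t := by linarith
  rw [div_le_iff₀ (by positivity)]
  have : 1 / t * (R / 2) * t ^ 3 = R * t ^ 2 / 2 := by field_simp
  rw [this]
  nlinarith [mul_le_mul_of_nonneg_left (show 4 ≤ t ^ 2 by nlinarith) hR]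

/-- Under Rosenbaum's sensitivity model with bias at most `Γ` for a matched set of `n`
units, the variance of any score vector `ψ` under the treated-unit distribution is at
least `2 (max ψ − min ψ)² / (n³ Γ³)`. -/
theorem stmt18 (n : ℕ) (hn : 1 ≤ n) (Γ : ℝ) (hΓ : 1 ≤ Γ) (u : Fin n → ℝ)
    (hu : ∀ i, u i ∈ Set.Icc (0 : ℝ) 1) (ψ : Fin n → ℝ) :
    2 * (Finset.univ.sup' (Finset.univ_nonempty_iff.mpr ⟨⟨0, hn⟩⟩) ψ -
          Finset.univ.inf' (Finset.univ_nonempty_iff.mpr ⟨⟨0, hn⟩⟩) ψ) ^ 2 /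
        ((n : ℝ) ^ 3 * Γ ^ 3) ≤
      (∑ i, (Real.exp (Real.log Γ * u i) / ∑ j, Real.exp (Real.log Γ * u j)) * (ψ i) ^ 2)
        - (∑ i, (Real.exp (Real.log Γ * u i) / ∑ j, Real.exp (Real.log Γ * u j)) * ψ i) ^ 2 := by
  have hw : ∀ i, exp (log Γ * u i) ∈ Set.Icc 1 Γ := fun i => exp_log_mul_mem_Icc hΓ (hu i)
  set p : Fin n → ℝ := fun i => exp (log Γ * u i) / ∑ j, exp (log Γ * u j)
  have hp_sum : ∑ i, p i = 1 := by
    rw [← sum_div, div_self (sum_pos (fun i _ => exp_pos _) ⟨⟨0, hn⟩, mem_univ _⟩).ne']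
  have hp_lb : ∀ i ∈ univ, 1 / (n * Γ) ≤ p i := fun i _ => by
    simpa using one_div_card_mul_le_div_sum hw i
  rw [sum_mul_sq_sub_sq_sum_mul_eq _ _ _ hp_sum]
  obtain ⟨a, -, ha⟩ := exists_mem_eq_sup' (univ_nonempty_iff.mpr ⟨⟨0, hn⟩⟩) ψ
  obtain ⟨b, -, hb⟩ := exists_mem_eq_inf' (univ_nonempty_iff.mpr ⟨⟨0, hn⟩⟩) ψ
  rw [ha, hb]
  by_cases hab : a = b
  · rw [hab, sub_self, zero_pow two_ne_zero, mul_zero, zero_div]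
    exact sum_nonneg fun i _ =>
      mul_nonneg (div_nonneg (exp_pos _).le (sum_nonneg fun j _ => (exp_pos _).le)) (sq_nonneg _)
  have hn2 : (2 : ℝ) ≤ n := by
    exact_mod_cast (Fintype.card_fin n) ▸ Fintype.one_lt_card_iff.mpr ⟨a, b, hab⟩
  calc 2 * (ψ a - ψ b) ^ 2 / ((n : ℝ) ^ 3 * Γ ^ 3)
      ≤ 1 / (n * Γ) * ((ψ a - ψ b) ^ 2 / 2) := by
        rw [← mul_pow]; exact two_mul_div_pow_three_le (sq_nonneg _) (by nlinarith)
    _ ≤ _ := mul_half_sq_sub_le_sum_mul_sq_sub _ _ _ (by positivity) hp_lb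
        (mem_univ a) (mem_univ b) hab _
end

section
/- Let S be a finite nonempty index set and, for each s ∈ S, let μ_s, μ̃_s ∈ ℝ with μ_s ≤ μ̃_s, and let v_s², ṽ_s² ≥ 0 be nonnegative reals. Let A = {s ∈ S : v_s² > ṽ_s²}, σ = √(Σ_{s∈S} v_s²), and σ̃ = √(Σ_{s∈S} ṽ_s²), and assume σ̃ > 0. Then for every real k ≥ 0: ( Σ_{s∈S} μ̃_s + k σ̃ ) − ( Σ_{s∈S} μ_s + k σ ) ≥ Σ_{s∈A} (μ̃_s − μ_s) − (k / (2 σ̃)) · Σ_{s∈A} (v_s² − ṽ_s²). -/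
/-!
Only the matched sets in `A` can make the true quantile exceed the procedure's: outside `A` both
the mean gap `μ̃_s - μ_s` and the variance gap `ṽ_s² - v_s²` are nonnegative. The means contribute
at least `Σ_A (μ̃_s - μ_s)`, and for the standard deviations the tangent line of the concave
function `√·` at `σ̃²` gives `σ - σ̃ ≤ (σ² - σ̃²) / (2σ̃) ≤ Σ_A (v_s² - ṽ_s²) / (2σ̃)`.
-/

open Finset

theorem Real.sqrt_le_sqrt_add_sub_div {x y : ℝ} (hx : 0 ≤ x) (hy : 0 < y) :
    √x ≤ √y + (x - y) / (2 * √y) := by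
  rw [← sub_le_iff_le_add', le_div_iff₀ (by positivity)]
  nlinarith [sq_nonneg (√x - √y), Real.sq_sqrt hx, Real.sq_sqrt hy.le]

theorem Finset.sum_le_sum_add_sum_filter_lt_sub {ι : Type*} (s : Finset ι) (f g : ι → ℝ) :
    ∑ i ∈ s, f i ≤ ∑ i ∈ s, g i + ∑ i ∈ s with g i < f i, (f i - g i) := by
  rw [← sub_le_iff_le_add', ← sum_sub_distrib, sum_filter]
  gcongr with i
  split_ifs with h
  · rfl
  · linarith [not_lt.mp h]

theorem Finset.sum_filter_sub_le_sum_sub {ι : Type*} (s : Finset ι) (p : ι → Prop)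
    [DecidablePred p] {f g : ι → ℝ} (hfg : ∀ i ∈ s, f i ≤ g i) :
    ∑ i ∈ s with p i, (g i - f i) ≤ ∑ i ∈ s, g i - ∑ i ∈ s, f i := by
  rw [← sum_sub_distrib]
  exact sum_le_sum_of_subset_of_nonneg (filter_subset p s)
    fun i hi _ => sub_nonneg.mpr (hfg i hi)

theorem stmt19_general {ι : Type*} [Fintype ι]
    (μ μt v2 vt2 : ι → ℝ)
    (hμ : ∀ s, μ s ≤ μt s)
    (hσ : 0 < Real.sqrt (∑ s, vt2 s)) (k : ℝ) (hk : 0 ≤ k) :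
    (∑ s ∈ Finset.univ.filter fun s => vt2 s < v2 s, (μt s - μ s)) -
        k / (2 * Real.sqrt (∑ s, vt2 s)) *
          ∑ s ∈ Finset.univ.filter fun s => vt2 s < v2 s, (v2 s - vt2 s) ≤
      ((∑ s, μt s) + k * Real.sqrt (∑ s, vt2 s)) -
        ((∑ s, μ s) + k * Real.sqrt (∑ s, v2 s)) := by
  set excess := ∑ s ∈ univ with vt2 s < v2 s, (v2 s - vt2 s)
  have hvt : 0 < ∑ s, vt2 s := Real.sqrt_pos.mp hσ
  have hmean := sum_filter_sub_le_sum_sub univ (fun s => vt2 s < v2 s) fun s _ => hμ s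
  have hsd : √(∑ s, v2 s) - √(∑ s, vt2 s) ≤ excess / (2 * √(∑ s, vt2 s)) := by
    have hsum := sum_le_sum_add_sum_filter_lt_sub univ v2 vt2
    have hx : 0 ≤ ∑ s, vt2 s + excess := hvt.le.trans (le_add_of_nonneg_right
      (sum_nonneg fun s hs => sub_nonneg.mpr (mem_filter.mp hs).2.le))
    have htangent := (Real.sqrt_le_sqrt hsum).trans (Real.sqrt_le_sqrt_add_sub_div hx hvt)
    rw [add_sub_cancel_left] at htangent
    linarith
  have hquantile : k * (√(∑ s, v2 s) - √(∑ s, vt2 s)) ≤ k / (2 * √(∑ s, vt2 s)) * excess := by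
    rw [div_mul_eq_mul_div, mul_div_assoc]
    exact mul_le_mul_of_nonneg_left hsd hk
  linarith

/-- Deterministic inequality underlying the asymptotic validity of the
Gaussian-approximation sensitivity analysis: with `A = {s : v_s² > ṽ_s²}`,
`(Σ μ̃_s + k σ̃) − (Σ μ_s + k σ) ≥ Σ_A (μ̃_s − μ_s) − (k/(2σ̃)) Σ_A (v_s² − ṽ_s²)`. -/
theorem stmt19 {ι : Type*} [Fintype ι] [Nonempty ι]
    (μ μt v2 vt2 : ι → ℝ)
    (hμ : ∀ s, μ s ≤ μt s) (hv2 : ∀ s, 0 ≤ v2 s) (hvt2 : ∀ s, 0 ≤ vt2 s)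
    (hσ : 0 < Real.sqrt (∑ s, vt2 s)) (k : ℝ) (hk : 0 ≤ k) :
    (∑ s ∈ Finset.univ.filter fun s => vt2 s < v2 s, (μt s - μ s)) -
        k / (2 * Real.sqrt (∑ s, vt2 s)) *
          ∑ s ∈ Finset.univ.filter fun s => vt2 s < v2 s, (v2 s - vt2 s) ≤
      ((∑ s, μt s) + k * Real.sqrt (∑ s, vt2 s)) -
        ((∑ s, μ s) + k * Real.sqrt (∑ s, v2 s)) :=
  stmt19_general μ μt v2 vt2 hμ hσ k hk
end
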